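/- arXiv:1708.01544 — 8 statements merged into one kernel-verified Lean document; each statement's English description precedes it below -/
import Mathlib

section
/- Let u, v ∈ T^d = (ℝ ∪ {-∞})^d with u ≤ v coordinatewise. The tropical segment between u and v, i.e., the set of points of the form max(λ + u, μ + v) (coordinatewise maximum, scalars added to every coordinate) with max(λ,μ) = 0, is a polygonal curve consisting of at most d ordinary segments; when oriented from u to v, the successive segments are supported by direction vectors e^{K_1}, …, e^{K_ℓ} where K_1 ⊊ ⋯ ⊊ K_ℓ ⊆ [d], ℓ ≤ d, and e^K denotes the 0/1 indicator vector of K. -/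
/-!
Coordinate `k` of `m ↦ max (u k) (m + v k)` stays equal to `u k` while `m ≤ u k - v k` and
increases with slope one afterwards. Sorting the distinct switch points `u k - v k` (all `≤ 0`
since `u ≤ v`) gives the breakpoints of the curve, and on the piece following the `i`-th switch
point exactly the coordinates whose switch point has been passed move, a set that grows with `i`.
-/

/-- The tropical segment between `u` and `v` in `T^d`, where `T = ℝ ∪ {-∞}`. -/
def tsegm {d : ℕ} (u v : Fin d → WithBot ℝ) : Set (Fin d → WithBot ℝ) :=
  {z | ∃ l m : WithBot ℝ, max l m = 0 ∧ z = fun k => max (l + u k) (m + v k)}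

open Finset

section Breakpoints

variable {ι α : Type*} [Fintype ι] [LinearOrder α] (t : ι → α) (b : α)

noncomputable def sortedValues : Fin (univ.image t).card ↪o α :=
  (univ.image t).orderEmbOfFin rfl

lemma exists_sortedValues_eq (k : ι) : ∃ i, sortedValues t i = t k := by
  obtain ⟨i, hi⟩ : t k ∈ Set.range (sortedValues t) := by
    rw [sortedValues, range_orderEmbOfFin]
    exact mem_image_of_mem t (mem_univ k)
  exact ⟨i, hi⟩

lemma exists_eq_sortedValues (i : Fin (univ.image t).card) : ∃ k, t k = sortedValues t i := by
  obtain ⟨k, -, hk⟩ := mem_image.1 (orderEmbOfFin_mem (univ.image t) rfl i)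
  exact ⟨k, hk⟩

noncomputable def sublevel (i : Fin (univ.image t).card) : Finset ι :=
  {k | t k ≤ sortedValues t i}

lemma sublevel_ssubset {i j : Fin (univ.image t).card} (hij : i < j) :
    sublevel t i ⊂ sublevel t j := by
  have hlt : sortedValues t i < sortedValues t j := (sortedValues t).strictMono hij
  refine Finset.ssubset_iff_subset_ne.2 ⟨fun k hk => ?_, fun heq => ?_⟩
  · simp only [sublevel, mem_filter, mem_univ, true_and] at hk ⊢
    exact hk.trans hlt.le
  · obtain ⟨k, hk⟩ := exists_eq_sortedValues t j
    have hkj : k ∈ sublevel t j := by simp [sublevel, hk]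
    rw [← heq] at hkj
    simp only [sublevel, mem_filter, mem_univ, true_and] at hkj
    exact (hk ▸ hlt).not_ge hkj

noncomputable def breakpoints : Fin ((univ.image t).card + 1) → α :=
  Fin.snoc (α := fun _ => α) (sortedValues t) b

@[simp]
lemma breakpoints_castSucc (i : Fin (univ.image t).card) :
    breakpoints t b i.castSucc = sortedValues t i :=
  Fin.snoc_castSucc (α := fun _ => α) ..

@[simp]
lemma breakpoints_last : breakpoints t b (Fin.last _) = b :=
  Fin.snoc_last (α := fun _ => α) ..

variable {t b}

lemma breakpoints_le (h : ∀ k, t k ≤ b) (i : Fin ((univ.image t).card + 1)) :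
    breakpoints t b i ≤ b := by
  induction i using Fin.lastCases with
  | last => simp
  | cast i =>
    obtain ⟨k, hk⟩ := exists_eq_sortedValues t i
    simpa [← hk] using h k

lemma monotone_breakpoints (h : ∀ k, t k ≤ b) : Monotone (breakpoints t b) := by
  intro i j hij
  induction j using Fin.lastCases with
  | last => simpa using breakpoints_le h i
  | cast j =>
    induction i using Fin.lastCases with
    | last => exact absurd hij (Fin.castSucc_lt_last j).not_ge
    | cast i => simpa using (sortedValues t).monotone (Fin.castSucc_le_castSucc_iff.1 hij)

lemma breakpoints_zero_le (h : ∀ k, t k ≤ b) (k : ι) : breakpoints t b 0 ≤ t k := by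
  obtain ⟨j, hj⟩ := exists_sortedValues_eq t k
  calc breakpoints t b 0 ≤ breakpoints t b j.castSucc := monotone_breakpoints h (Fin.zero_le _)
    _ = t k := by simp [hj]

lemma breakpoints_succ_le_of_notMem_sublevel (h : ∀ k, t k ≤ b) {i : Fin (univ.image t).card}
    {k : ι} (hk : k ∉ sublevel t i) : breakpoints t b i.succ ≤ t k := by
  obtain ⟨j, hj⟩ := exists_sortedValues_eq t k
  have hij : i < j := by
    simp only [sublevel, mem_filter, mem_univ, true_and, not_le, ← hj] at hk
    exact (sortedValues t).lt_iff_lt.1 hk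
  calc breakpoints t b i.succ ≤ breakpoints t b j.castSucc :=
        monotone_breakpoints h (Fin.succ_le_castSucc_iff.2 hij)
    _ = t k := by simp [hj]

end Breakpoints

/-- `x - y` on `T`. The value `⊥` for `y = ⊥` is junk, harmless under `x ≤ y`: then the coordinate
`max x (m + y)` is constantly `⊥`, whatever its switch point. -/
def tropDiv (x y : WithBot ℝ) : WithBot ℝ :=
  WithBot.map₂ (· - ·) x y

lemma add_le_of_le_tropDiv {x y m : WithBot ℝ} (h : m ≤ tropDiv x y) : m + y ≤ x := by
  induction y using WithBot.recBotCoe with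
  | bot => simp
  | coe b =>
    induction x using WithBot.recBotCoe with
    | bot => simp_all [tropDiv]
    | coe a =>
      induction m using WithBot.recBotCoe with
      | bot => simp
      | coe m =>
        simp only [tropDiv, WithBot.map₂_coe_coe, WithBot.coe_le_coe] at h
        exact_mod_cast (le_sub_iff_add_le.1 h)

lemma le_add_of_tropDiv_le {x y m : WithBot ℝ} (hxy : x ≤ y) (h : tropDiv x y ≤ m) :
    x ≤ m + y := by
  induction y using WithBot.recBotCoe with
  | bot => simpa using hxy
  | coe b =>
    induction x using WithBot.recBotCoe with
    | bot => simp
    | coe a =>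
      induction m using WithBot.recBotCoe with
      | bot => simp [tropDiv] at h
      | coe m =>
        simp only [tropDiv, WithBot.map₂_coe_coe, WithBot.coe_le_coe] at h
        exact_mod_cast (sub_le_iff_le_add.1 h)

lemma tropDiv_nonpos {x y : WithBot ℝ} (hxy : x ≤ y) : tropDiv x y ≤ 0 := by
  induction y using WithBot.recBotCoe with
  | bot => simp [tropDiv]
  | coe b =>
    induction x using WithBot.recBotCoe with
    | bot => simp [tropDiv]
    | coe a =>
      simp only [tropDiv, WithBot.map₂_coe_coe]
      exact_mod_cast sub_nonpos.2 (WithBot.coe_le_coe.1 hxy)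

lemma coe_add_eq_coe_add_add_sub (a c : ℝ) (y : WithBot ℝ) :
    (c : WithBot ℝ) + y = (a + y) + ((c - a : ℝ) : WithBot ℝ) := by
  induction y using WithBot.recBotCoe with
  | bot => simp
  | coe b =>
    norm_cast
    ring_nf

lemma tsegm_eq_setOf_max {d : ℕ} {u v : Fin d → WithBot ℝ} (huv : u ≤ v) :
    tsegm u v = {z | ∃ m : WithBot ℝ, m ≤ 0 ∧ z = fun k => max (u k) (m + v k)} := by
  ext z
  simp only [tsegm, Set.mem_ofPred_eq]
  constructor
  · rintro ⟨l, m, hlm, rfl⟩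
    rcases max_choice l m with h | h
    · obtain rfl : l = 0 := h.symm.trans hlm
      exact ⟨m, hlm ▸ le_max_right 0 m, by simp⟩
    · -- `0 ⊙ v` dominates both `l ⊙ u` and `u`, so the point is `v = u ⊕ (0 ⊙ v)`.
      obtain rfl : m = 0 := h.symm.trans hlm
      refine ⟨0, le_rfl, funext fun k => ?_⟩
      have hl : l + u k ≤ u k := by
        simpa using add_le_add_left (hlm ▸ le_max_left l 0 : l ≤ 0) (u k)
      simp only [zero_add, max_eq_right (huv k), max_eq_right (hl.trans (huv k))]
  · rintro ⟨m, hm, rfl⟩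
    exact ⟨0, m, max_eq_left hm, by simp⟩

/-- For `u ≤ v`, the tropical segment `tsegm u v` is a polygonal curve made of at
most `d` ordinary segments; oriented from `u` to `v`, they are supported by the
direction vectors `e^{K_1}, …, e^{K_ℓ}` for a strictly increasing chain
`K_1 ⊊ ⋯ ⊊ K_ℓ` of subsets of `[d]`. This is expressed via the parametrization
`m ↦ u ⊕ (m ⊙ v)`, `m ≤ 0`, of the tropical segment: there are breakpoints
`μ_0 ≤ μ_1 ≤ ⋯ ≤ μ_ℓ = 0` such that the curve is constant (equal to `u`) for
`m ≤ μ_0`, and on each interval `[μ_{i}, μ_{i+1}]` the curve moves with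
direction vector `e^{K_{i+1}}`. -/
theorem tropical_segment_structure (d : ℕ) (u v : Fin d → WithBot ℝ)
    (huv : u ≤ v) :
    ∃ ℓ : ℕ, ℓ ≤ d ∧ ∃ K : Fin ℓ → Finset (Fin d),
      (∀ i j : Fin ℓ, i < j → K i ⊂ K j) ∧
      ∃ μ : Fin (ℓ + 1) → WithBot ℝ, Monotone μ ∧ μ (Fin.last ℓ) = 0 ∧
        (∀ m : WithBot ℝ, m ≤ μ 0 → (fun k => max (u k) (m + v k)) = u) ∧
        tsegm u v = {z | ∃ m : WithBot ℝ, m ≤ 0 ∧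
          z = fun k => max (u k) (m + v k)} ∧
        (∀ i : Fin ℓ, ∀ a c : ℝ, μ i.castSucc ≤ (a : WithBot ℝ) → a ≤ c →
          (c : WithBot ℝ) ≤ μ i.succ → ∀ k : Fin d,
            max (u k) ((c : WithBot ℝ) + v k) =
              max (u k) ((a : WithBot ℝ) + v k) +
                (if k ∈ K i then ((c - a : ℝ) : WithBot ℝ) else 0)) := by
  set t : Fin d → WithBot ℝ := fun k => tropDiv (u k) (v k)
  have ht : ∀ k, t k ≤ 0 := fun k => tropDiv_nonpos (huv k)
  refine ⟨_, card_image_le.trans_eq (card_fin d), sublevel t, fun i j => sublevel_ssubset t,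
    breakpoints t 0, monotone_breakpoints ht, breakpoints_last t 0,
    fun m hm => funext fun k => max_eq_left (add_le_of_le_tropDiv
      (hm.trans (breakpoints_zero_le ht k))), tsegm_eq_setOf_max huv, ?_⟩
  intro i a c ha hac hc k
  have hac' : (a : WithBot ℝ) ≤ c := WithBot.coe_le_coe.2 hac
  by_cases hk : k ∈ sublevel t i
  · have hta : t k ≤ a := by
      simp only [sublevel, mem_filter, mem_univ, true_and] at hk
      exact hk.trans (by simpa using ha)
    rw [if_pos hk, max_eq_right (le_add_of_tropDiv_le (huv k) hta),
      max_eq_right (le_add_of_tropDiv_le (huv k) (hta.trans hac')),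
      coe_add_eq_coe_add_add_sub a]
  · have hct : (c : WithBot ℝ) ≤ t k := hc.trans (breakpoints_succ_le_of_notMem_sublevel ht hk)
    rw [if_neg hk, add_zero, max_eq_left (add_le_of_le_tropDiv hct),
      max_eq_left (add_le_of_le_tropDiv (hac'.trans hct))]
end

section
/- Let S = [u,v] be a segment between points u, v ∈ ℝ^d with strictly positive coordinates, and let t > 1. Let S^trop be the tropical segment between log_t u and log_t v (applied coordinatewise). Then every point of S^trop is within sup-norm distance log_t 2 of the set {log_t s : s ∈ S}; that is, d_∞(S^trop, log_t S) ≤ log_t 2 where d_∞ is the directed Hausdorff distance induced by the ℓ∞ metric. -/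
/-- Every point of the tropical segment between `log_t u` and `log_t v` is
within sup-norm distance `log_t 2` of the image under `log_t` of the ordinary
segment `[u, v]` (for `u, v` with positive coordinates and `t > 1`).
Note that the sup metric on `Fin d → ℝ` is the default `dist`. -/
theorem tropical_segment_close_to_log_segment
    (d : ℕ) (u v : Fin d → ℝ) (hu : ∀ i, 0 < u i) (hv : ∀ i, 0 < v i)
    (t : ℝ) (ht : 1 < t) (z : Fin d → ℝ)
    (hz : ∃ l m : ℝ, max l m = 0 ∧
      z = fun i => max (l + Real.log (u i) / Real.log t)
        (m + Real.log (v i) / Real.log t)) :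
    ∃ s ∈ segment ℝ u v,
      dist z (fun i => Real.log (s i) / Real.log t) ≤
        Real.log 2 / Real.log t := by
  obtain ⟨l, m, hlm, hzdef⟩ := hz
  have hL : 0 < Real.log t := Real.log_pos ht
  set L := Real.log t with hLdef
  set a := Real.exp (l * L) with ha
  set b := Real.exp (m * L) with hb
  have hapos : 0 < a := Real.exp_pos _
  have hbpos : 0 < b := Real.exp_pos _
  have hl0 : l ≤ 0 := hlm ▸ le_max_left l m
  have hm0 : m ≤ 0 := hlm ▸ le_max_right l m
  have ha1 : a ≤ 1 := by
    rw [ha, ← Real.exp_zero]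
    exact Real.exp_le_exp.2 (by nlinarith)
  have hb1 : b ≤ 1 := by
    rw [hb, ← Real.exp_zero]
    exact Real.exp_le_exp.2 (by nlinarith)
  have hone : a = 1 ∨ b = 1 := by
    rcases le_total l m with h | h
    · right
      have hm : m = 0 := by rw [← hlm, max_eq_right h]
      rw [hb, hm, zero_mul, Real.exp_zero]
    · left
      have hl : l = 0 := by rw [← hlm, max_eq_left h]
      rw [ha, hl, zero_mul, Real.exp_zero]
  have hab1 : 1 ≤ a + b := by rcases hone with h | h <;> nlinarith
  have hab2 : a + b ≤ 2 := by linarith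
  have habpos : 0 < a + b := by linarith
  refine ⟨fun i => (a * u i + b * v i) / (a + b), ?_, ?_⟩
  · refine ⟨a / (a + b), b / (a + b), by positivity, by positivity, ?_, ?_⟩
    · field_simp
    · funext i
      simp only [Pi.add_apply, Pi.smul_apply, smul_eq_mul]
      field_simp
  · have hlog2 : (0:ℝ) ≤ Real.log 2 := Real.log_nonneg (by norm_num)
    rw [dist_pi_le_iff (by positivity)]
    intro i
    have hui := hu i
    have hvi := hv i
    have hMpos : 0 < max (a * u i) (b * v i) := lt_max_of_lt_left (by positivity)
    have hSpos : 0 < a * u i + b * v i := by positivity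
    -- z i = log (max (a * u i) (b * v i)) / L
    have hloga : Real.log (a * u i) = l * L + Real.log (u i) := by
      rw [Real.log_mul (ne_of_gt hapos) (ne_of_gt hui), ha, Real.log_exp]
    have hlogb : Real.log (b * v i) = m * L + Real.log (v i) := by
      rw [Real.log_mul (ne_of_gt hbpos) (ne_of_gt hvi), hb, Real.log_exp]
    have hzi : z i = Real.log (max (a * u i) (b * v i)) / L := by
      rw [hzdef]
      have : Real.log (max (a * u i) (b * v i))
          = max (Real.log (a * u i)) (Real.log (b * v i)) := by
        rcases le_total (a * u i) (b * v i) with h | h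
        · rw [max_eq_right h, max_eq_right (Real.log_le_log (by positivity) h)]
        · rw [max_eq_left h, max_eq_left (Real.log_le_log (by positivity) h)]
      rw [this, hloga, hlogb]
      show (l + Real.log (u i) / L) ⊔ (m + Real.log (v i) / L) = _
      rw [← max_div_div_right (le_of_lt hL)]
      congr 1 <;> field_simp
    have hlogs : Real.log ((a * u i + b * v i) / (a + b))
        = Real.log (a * u i + b * v i) - Real.log (a + b) := by
      rw [Real.log_div (ne_of_gt hSpos) (ne_of_gt habpos)]
    -- bounds
    have hb1' : Real.log (max (a * u i) (b * v i)) ≤ Real.log (a * u i + b * v i) :=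
      Real.log_le_log hMpos (max_le (by nlinarith) (by nlinarith))
    have hb2' : Real.log (a * u i + b * v i)
        ≤ Real.log 2 + Real.log (max (a * u i) (b * v i)) := by
      rw [← Real.log_mul (by norm_num) (ne_of_gt hMpos)]
      apply Real.log_le_log hSpos
      have h1 : a * u i ≤ max (a * u i) (b * v i) := le_max_left _ _
      have h2 : b * v i ≤ max (a * u i) (b * v i) := le_max_right _ _
      linarith
    have hb3 : 0 ≤ Real.log (a + b) := Real.log_nonneg hab1
    have hb4 : Real.log (a + b) ≤ Real.log 2 := Real.log_le_log habpos hab2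
    rw [Real.dist_eq, hzi, hlogs, div_sub_div_same]
    rw [abs_div, abs_of_pos hL, div_le_div_iff₀ hL hL]
    have : |Real.log (max (a * u i) (b * v i))
        - (Real.log (a * u i + b * v i) - Real.log (a + b))| ≤ Real.log 2 := by
      rw [abs_le]; constructor <;> linarith
    nlinarith [abs_nonneg (Real.log (max (a * u i) (b * v i))
        - (Real.log (a * u i + b * v i) - Real.log (a + b)))]
end

section
/- Let c₁,…,c_p be nonzero integers with Σ|c_k| ≤ D and β₁ > β₂ > ⋯ > β_p real numbers with β₁ − β₂ ≥ η > 0 (when p ≥ 2). If t ≥ D^{1/η}, then Σ_{k=2}^p |c_k| t^{β_k − β₁} ≤ 1 − 1/D, and consequently |Σ_{k=1}^p c_k t^{β_k}| ≥ t^{β₁}/D. -/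
/-- Let `c₀, …, c_n` be nonzero integers with `∑ |c_k| ≤ D` and
`β₀ > β₁ > ⋯ > β_n` with `β₀ - β₁ ≥ η > 0` (when there are at least two
terms). If `t ≥ D^{1/η}` (and `t > 1`), then
`∑_{k ≥ 1} |c_k| t^{β_k - β₀} ≤ 1 - 1/D`, and consequently
`|∑_k c_k t^{β_k}| ≥ t^{β₀} / D`. -/
theorem leading_term_domination (n : ℕ) (D : ℕ) (hD : 1 ≤ D)
    (c : Fin (n + 1) → ℤ) (hc : ∀ k, c k ≠ 0)
    (hsum : (∑ k, (c k).natAbs) ≤ D)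
    (β : Fin (n + 1) → ℝ) (hβ : StrictAnti β)
    (η : ℝ) (hη : 0 < η)
    (hgap : ∀ h : 1 < n + 1, η ≤ β ⟨0, Nat.succ_pos n⟩ - β ⟨1, h⟩)
    (t : ℝ) (ht1 : 1 < t) (ht : (D : ℝ) ^ (1 / η) ≤ t) :
    (∑ k ∈ Finset.univ.erase (⟨0, Nat.succ_pos n⟩ : Fin (n + 1)),
        ((c k).natAbs : ℝ) * t ^ (β k - β ⟨0, Nat.succ_pos n⟩)) ≤
      1 - 1 / (D : ℝ) ∧
    t ^ β ⟨0, Nat.succ_pos n⟩ / (D : ℝ) ≤ |∑ k, (c k : ℝ) * t ^ β k| := by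
  set i0 : Fin (n + 1) := ⟨0, Nat.succ_pos n⟩ with hi0
  have htpos : (0 : ℝ) < t := lt_trans one_pos ht1
  have hDpos : (0 : ℝ) < D := by exact_mod_cast hD
  have hD1 : (1 : ℝ) ≤ D := by exact_mod_cast hD
  -- t^(-η) ≤ 1/D
  have hteta : t ^ (-η) ≤ 1 / (D : ℝ) := by
    have h1 : t ^ (-η) ≤ ((D : ℝ) ^ (1 / η)) ^ (-η) :=
      Real.rpow_le_rpow_of_nonpos (by positivity) ht (by linarith)
    have h2 : ((D : ℝ) ^ (1 / η)) ^ (-η) = 1 / (D : ℝ) := by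
      rw [← Real.rpow_mul hDpos.le]
      have : 1 / η * (-η) = -1 := by field_simp
      rw [this, Real.rpow_neg_one]
      exact (one_div _).symm
    linarith [h1, h2.le]
  have key : ∀ k ∈ Finset.univ.erase i0, t ^ (β k - β i0) ≤ 1 / (D : ℝ) := by
    intro k hk
    have hk0 : k ≠ i0 := Finset.ne_of_mem_erase hk
    have hk1 : 1 ≤ k.val := Nat.one_le_iff_ne_zero.mpr (fun h => hk0 (Fin.ext h))
    have hn : 1 < n + 1 := lt_of_le_of_lt hk1 k.isLt
    have hβk : β k ≤ β ⟨1, hn⟩ := hβ.antitone (show (⟨1, hn⟩ : Fin (n + 1)) ≤ k from hk1)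
    have hle : β k - β i0 ≤ -η := by have := hgap hn; linarith
    calc t ^ (β k - β i0) ≤ t ^ (-η) :=
          Real.rpow_le_rpow_of_exponent_le ht1.le hle
      _ ≤ 1 / (D : ℝ) := hteta
  -- sum of |c k| over erase ≤ D - 1
  have hc0 : (1 : ℝ) ≤ ((c i0).natAbs : ℝ) := by
    have : 1 ≤ (c i0).natAbs := Int.natAbs_pos.mpr (hc i0)
    exact_mod_cast this
  have hsplit : ((c i0).natAbs : ℝ) + ∑ k ∈ Finset.univ.erase i0, ((c k).natAbs : ℝ)
      ≤ (D : ℝ) := by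
    rw [Finset.add_sum_erase Finset.univ (fun k => (((c k).natAbs : ℝ))) (Finset.mem_univ i0)]
    exact_mod_cast hsum
  have herase : ∑ k ∈ Finset.univ.erase i0, ((c k).natAbs : ℝ) ≤ (D : ℝ) - 1 := by
    linarith
  have part1 : (∑ k ∈ Finset.univ.erase i0,
      ((c k).natAbs : ℝ) * t ^ (β k - β i0)) ≤ 1 - 1 / (D : ℝ) := by
    calc ∑ k ∈ Finset.univ.erase i0, ((c k).natAbs : ℝ) * t ^ (β k - β i0)
        ≤ ∑ k ∈ Finset.univ.erase i0, ((c k).natAbs : ℝ) * (1 / (D : ℝ)) :=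
          Finset.sum_le_sum (fun k hk =>
            mul_le_mul_of_nonneg_left (key k hk) (by positivity))
      _ = (∑ k ∈ Finset.univ.erase i0, ((c k).natAbs : ℝ)) * (1 / (D : ℝ)) := by
          rw [← Finset.sum_mul]
      _ ≤ ((D : ℝ) - 1) * (1 / (D : ℝ)) := by
          apply mul_le_mul_of_nonneg_right herase (by positivity)
      _ = 1 - 1 / (D : ℝ) := by field_simp
  refine ⟨part1, ?_⟩
  -- second part
  have htb : (0 : ℝ) < t ^ β i0 := Real.rpow_pos_of_pos htpos _
  have habs : |∑ k ∈ Finset.univ.erase i0, (c k : ℝ) * t ^ β k|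
      ≤ t ^ β i0 * (1 - 1 / (D : ℝ)) := by
    calc |∑ k ∈ Finset.univ.erase i0, (c k : ℝ) * t ^ β k|
        ≤ ∑ k ∈ Finset.univ.erase i0, |(c k : ℝ) * t ^ β k| :=
          Finset.abs_sum_le_sum_abs _ _
      _ = ∑ k ∈ Finset.univ.erase i0,
            ((c k).natAbs : ℝ) * t ^ (β k - β i0) * t ^ β i0 := by
          apply Finset.sum_congr rfl
          intro k _
          rw [abs_mul, abs_of_pos (Real.rpow_pos_of_pos htpos _), mul_assoc,
            ← Real.rpow_add htpos, sub_add_cancel]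
          congr 1
          rw [Nat.cast_natAbs, Int.cast_abs]
      _ = (∑ k ∈ Finset.univ.erase i0,
            ((c k).natAbs : ℝ) * t ^ (β k - β i0)) * t ^ β i0 := by
          rw [← Finset.sum_mul]
      _ ≤ (1 - 1 / (D : ℝ)) * t ^ β i0 :=
          mul_le_mul_of_nonneg_right part1 htb.le
      _ = t ^ β i0 * (1 - 1 / (D : ℝ)) := by ring
  have hsum_split : ∑ k, (c k : ℝ) * t ^ β k
      = (c i0 : ℝ) * t ^ β i0 + ∑ k ∈ Finset.univ.erase i0, (c k : ℝ) * t ^ β k :=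
    (Finset.add_sum_erase _ _ (Finset.mem_univ i0)).symm
  have hlead : t ^ β i0 ≤ |(c i0 : ℝ) * t ^ β i0| := by
    rw [abs_mul, abs_of_pos htb]
    have h1 : (1 : ℝ) ≤ |(c i0 : ℝ)| := by
      rw [← Int.cast_abs]
      exact_mod_cast Int.one_le_abs (hc i0)
    nlinarith
  set A := (c i0 : ℝ) * t ^ β i0
  set B := ∑ k ∈ Finset.univ.erase i0, (c k : ℝ) * t ^ β k
  have htri : |A| ≤ |A + B| + |B| := by
    calc |A| = |(A + B) + (-B)| := by ring_nf
      _ ≤ |A + B| + |(-B)| := abs_add_le _ _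
      _ = |A + B| + |B| := by rw [abs_neg]
  have hfinal : t ^ β i0 / (D : ℝ) ≤ |A + B| := by
    have hdiv : t ^ β i0 - t ^ β i0 * (1 - 1 / (D : ℝ)) = t ^ β i0 / (D : ℝ) := by
      field_simp
      ring
    linarith
  rw [hsum_split]
  exact hfinal
end

section
/- Let x, y ∈ ℝ^d ∖ {0} and suppose x(t), y(t) ∈ ℝ^d are families such that each coordinate x_i(t) = a_i t^{ξ_i} + o(t^{ξ_i}) and y_i(t) = b_i t^{υ_i} + o(t^{υ_i}) as t → ∞, with a_i, b_i ≠ 0 whenever ξ_i, υ_i > −∞. If the sets argmax_i ξ_i and argmax_i υ_i are disjoint, then the angle between x(t) and y(t) tends to π/2 as t → +∞, i.e., ⟨x(t), y(t)⟩ / (‖x(t)‖ ‖y(t)‖) → 0. -/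
/-!
Let `p = max ξ` and `q = max υ`. Coordinatewise, `t ^ (-p) • x(t)` converges to the vector of
leading coefficients `a` restricted to `argmax ξ`, and likewise `t ^ (-q) • y(t)` converges to `b`
restricted to `argmax υ`; both limits are nonzero. The angle is invariant under positive scaling and
continuous away from `0`, so `∠ x(t) y(t)` tends to the angle between the two limits, which have
disjoint supports and are therefore orthogonal.
-/

open Asymptotics Filter Topology InnerProductGeometry

section LeadingTerm

variable {f : ℝ → ℝ} {a r : ℝ}

theorem tendsto_div_rpow_of_isLittleO
    (h : (fun t => f t - a * t ^ r) =o[atTop] fun t => t ^ r) :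
    Tendsto (fun t => f t / t ^ r) atTop (𝓝 a) := by
  have h0 := h.tendsto_div_nhds_zero.add_const a
  rw [zero_add] at h0
  refine h0.congr' ?_
  filter_upwards [eventually_gt_atTop 0] with t ht
  rw [sub_div, mul_div_cancel_right₀ _ (Real.rpow_pos_of_pos ht r).ne', sub_add_cancel]

theorem tendsto_div_rpow_of_isLittleO_of_lt {p : ℝ}
    (h : (fun t => f t - a * t ^ r) =o[atTop] fun t => t ^ r) (hrp : r < p) :
    Tendsto (fun t => f t / t ^ p) atTop (𝓝 0) := by
  have hdecay : Tendsto (fun t : ℝ => t ^ (r - p)) atTop (𝓝 0) := by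
    simpa using tendsto_rpow_neg_atTop (sub_pos.2 hrp)
  have h0 := (tendsto_div_rpow_of_isLittleO h).mul hdecay
  rw [mul_zero] at h0
  refine h0.congr' ?_
  filter_upwards [eventually_gt_atTop 0] with t ht
  have := (Real.rpow_pos_of_pos ht r).ne'
  rw [Real.rpow_sub ht]
  field_simp

end LeadingTerm

theorem WithBot.exists_max_coe_of_ne_bot {ι α : Type*} [Fintype ι] [LinearOrder α]
    (ξ : ι → WithBot α) (h : ∃ i, ξ i ≠ ⊥) : ∃ p : α, (∀ j, ξ j ≤ p) ∧ ∃ i, ξ i = p := by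
  obtain ⟨i₀, hi₀⟩ := h
  obtain ⟨i, -, hi⟩ := Finset.exists_max_image Finset.univ ξ ⟨i₀, Finset.mem_univ _⟩
  obtain ⟨p, hp⟩ :=
    WithBot.ne_bot_iff_exists.mp (ne_bot_of_le_ne_bot hi₀ (hi i₀ (Finset.mem_univ _)))
  exact ⟨p, fun j => hp ▸ hi j (Finset.mem_univ _), i, hp.symm⟩

theorem tendsto_angle_of_tendsto_smul {V : Type*} [NormedAddCommGroup V] [InnerProductSpace ℝ V]
    {α : Type*} {l : Filter α} {X Y : α → V} {c e : α → ℝ} {L M : V}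
    (hc : ∀ᶠ s in l, 0 < c s) (he : ∀ᶠ s in l, 0 < e s)
    (hX : Tendsto (fun s => c s • X s) l (𝓝 L)) (hY : Tendsto (fun s => e s • Y s) l (𝓝 M))
    (hL : L ≠ 0) (hM : M ≠ 0) :
    Tendsto (fun s => angle (X s) (Y s)) l (𝓝 (angle L M)) := by
  refine ((continuousAt_angle (x := (L, M)) hL hM).tendsto.comp (hX.prodMk_nhds hY)).congr' ?_
  filter_upwards [hc, he] with s hcs hes
  simp [angle_smul_left_of_pos _ _ hcs, angle_smul_right_of_pos _ _ hes]

section Euclidean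

variable {ι : Type*}

theorem EuclideanSpace.cos_angle_toLp [Fintype ι] (u v : ι → ℝ) :
    Real.cos (angle (WithLp.toLp 2 u : EuclideanSpace ℝ ι) (WithLp.toLp 2 v)) =
      (∑ i, u i * v i) / (Real.sqrt (∑ i, u i ^ 2) * Real.sqrt (∑ i, v i ^ 2)) := by
  simp [cos_angle, EuclideanSpace.norm_eq, PiLp.inner_apply, mul_comm]

theorem EuclideanSpace.inner_toLp_indicator_eq_zero [Fintype ι] {s t : Set ι}
    (hst : Disjoint s t) (a b : ι → ℝ) :
    inner ℝ (WithLp.toLp 2 (s.indicator a) : EuclideanSpace ℝ ι)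
      (WithLp.toLp 2 (t.indicator b)) = 0 := by
  refine Finset.sum_eq_zero fun i _ => ?_
  by_cases hs : i ∈ s
  · simp [Set.indicator_of_notMem (Set.disjoint_left.1 hst hs)]
  · simp [Set.indicator_of_notMem hs]

theorem EuclideanSpace.toLp_indicator_ne_zero {s : Set ι} {a : ι → ℝ} {i : ι} (hi : i ∈ s)
    (ha : a i ≠ 0) : (WithLp.toLp 2 (s.indicator a) : EuclideanSpace ℝ ι) ≠ 0 :=
  fun h => ha (by simpa [hi] using congr_arg (· i) h)

end Euclidean

section Expansion

variable {ι : Type*} {x : ℝ → ι → ℝ} {a : ι → ℝ} {ξ : ι → WithBot ℝ} {p : ℝ}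

theorem tendsto_div_rpow_indicator
    (hxr : ∀ i, ∀ r : ℝ, ξ i = r → (fun t => x t i - a i * t ^ r) =o[atTop] fun t => t ^ r)
    (hx0 : ∀ i, ξ i = ⊥ → ∀ t, x t i = 0) (hp : ∀ i, ξ i ≤ p) (i : ι) :
    Tendsto (fun t => x t i / t ^ p) atTop (𝓝 ({i | ξ i = p}.indicator a i)) := by
  cases hi : ξ i with
  | bot => simp [hi, hx0 i hi]
  | coe r =>
    have hrp : r ≤ p := WithBot.coe_le_coe.1 (hi ▸ hp i)
    rcases hrp.eq_or_lt with rfl | hlt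
    · simpa [hi] using tendsto_div_rpow_of_isLittleO (hxr i r hi)
    · simpa [hi, hlt.ne] using tendsto_div_rpow_of_isLittleO_of_lt (hxr i r hi) hlt

theorem tendsto_rpow_inv_smul_toLp [Fintype ι]
    (hxr : ∀ i, ∀ r : ℝ, ξ i = r → (fun t => x t i - a i * t ^ r) =o[atTop] fun t => t ^ r)
    (hx0 : ∀ i, ξ i = ⊥ → ∀ t, x t i = 0) (hp : ∀ i, ξ i ≤ p) :
    Tendsto (fun t => (t ^ p)⁻¹ • (WithLp.toLp 2 (x t) : EuclideanSpace ℝ ι)) atTop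
      (𝓝 (WithLp.toLp 2 ({i | ξ i = p}.indicator a))) := by
  have hcoord : Tendsto (fun t => (t ^ p)⁻¹ • x t) atTop (𝓝 ({i | ξ i = p}.indicator a)) :=
    tendsto_pi_nhds.2 fun i => by
      simpa [inv_mul_eq_div] using tendsto_div_rpow_indicator hxr hx0 hp i
  simpa [Function.comp_def] using ((PiLp.continuous_toLp 2 _).tendsto _).comp hcoord

end Expansion

/-- If the families `x(t), y(t) ∈ ℝ^d` have coordinates
`x_i(t) = a_i t^{ξ_i} + o(t^{ξ_i})` and `y_i(t) = b_i t^{υ_i} + o(t^{υ_i})`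
(with `a_i, b_i ≠ 0` for finite exponents, and coordinates with exponent `-∞`
identically zero), and the argmax sets of the exponents `ξ` and `υ` are
disjoint, then the angle between `x(t)` and `y(t)` tends to `π/2`, i.e.
`⟨x(t), y(t)⟩ / (‖x(t)‖ ‖y(t)‖) → 0` as `t → +∞`. -/
theorem angle_tendsto_pi_div_two (d : ℕ) (x y : ℝ → Fin d → ℝ)
    (a b : Fin d → ℝ) (ξ υ : Fin d → WithBot ℝ)
    (hxr : ∀ i, ∀ r : ℝ, ξ i = (r : WithBot ℝ) →
      a i ≠ 0 ∧ (fun t => x t i - a i * t ^ r) =o[atTop] fun t => t ^ r)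
    (hx0 : ∀ i, ξ i = ⊥ → ∀ t, x t i = 0)
    (hyr : ∀ i, ∀ r : ℝ, υ i = (r : WithBot ℝ) →
      b i ≠ 0 ∧ (fun t => y t i - b i * t ^ r) =o[atTop] fun t => t ^ r)
    (hy0 : ∀ i, υ i = ⊥ → ∀ t, y t i = 0)
    (hxne : ∃ i, ξ i ≠ ⊥) (hyne : ∃ i, υ i ≠ ⊥)
    (hdisj : ∀ i, (∀ j, ξ j ≤ ξ i) → (∀ j, υ j ≤ υ i) → False) :
    Tendsto (fun t => (∑ i, x t i * y t i) /
        (Real.sqrt (∑ i, (x t i) ^ 2) * Real.sqrt (∑ i, (y t i) ^ 2)))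
      atTop (nhds 0) := by
  obtain ⟨p, hp, ip, hip⟩ := WithBot.exists_max_coe_of_ne_bot ξ hxne
  obtain ⟨q, hq, iq, hiq⟩ := WithBot.exists_max_coe_of_ne_bot υ hyne
  have hscale_pos : ∀ r : ℝ, ∀ᶠ t : ℝ in atTop, 0 < (t ^ r)⁻¹ := fun r =>
    (eventually_gt_atTop 0).mono fun t ht => inv_pos.2 (Real.rpow_pos_of_pos ht r)
  have hangle := tendsto_angle_of_tendsto_smul (hscale_pos p) (hscale_pos q)
    (tendsto_rpow_inv_smul_toLp (fun i r h => (hxr i r h).2) hx0 hp)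
    (tendsto_rpow_inv_smul_toLp (fun i r h => (hyr i r h).2) hy0 hq)
    (EuclideanSpace.toLp_indicator_ne_zero hip (hxr ip p hip).1)
    (EuclideanSpace.toLp_indicator_ne_zero hiq (hyr iq q hiq).1)
  have hmax_disjoint : Disjoint {i | ξ i = p} {i | υ i = q} :=
    Set.disjoint_left.2 fun i hξ hυ => hdisj i (fun j => hξ ▸ hp j) (fun j => hυ ▸ hq j)
  rw [(inner_eq_zero_iff_angle_eq_pi_div_two _ _).1
    (EuclideanSpace.inner_toLp_indicator_eq_zero hmax_disjoint a b)] at hangle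
  simpa [Function.comp_def, EuclideanSpace.cos_angle_toLp] using
    (Real.continuous_cos.tendsto _).comp hangle
end

section
/- Consider the recursion defining the tropical central path of the 'long and winding' linear program: x^λ_1 = min(λ, 2), x^λ_2 = 1, and for 1 ≤ j < r: x^λ_{2j+1} = 1 + min(x^λ_{2j−1}, x^λ_{2j}) and x^λ_{2j+2} = (1 − 1/2^j) + max(x^λ_{2j−1}, x^λ_{2j}). Then for every 1 ≤ j < r and every integer k with 0 ≤ k ≤ 2^{j−1} − 1, at λ = 4k/2^j one has x^λ_{2j+1} = j + 2k/2^j and x^λ_{2j+2} = j + (2k+1)/2^j. -/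
/-- Sawtooth wave: distance-type function built from the fractional part. -/
noncomputable def triWave (t : ℝ) : ℝ := min (Int.fract t) (1 - Int.fract t)

lemma triWave_double (t : ℝ) :
    triWave (2 * t) = min (2 * triWave t) (1 - 2 * triWave t) := by
  have h0 := Int.fract_nonneg t
  have h1 := Int.fract_lt_one t
  have key : (2 : ℝ) * t = 2 * Int.fract t + ((2 * ⌊t⌋ : ℤ) : ℝ) := by
    push_cast
    rw [Int.fract]
    ring
  rw [triWave, key, Int.fract_add_intCast, triWave]
  rcases lt_or_ge (Int.fract t) (1 / 2) with h | h
  · rw [show min (Int.fract t) (1 - Int.fract t) = Int.fract t from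
      min_eq_left (by linarith),
      Int.fract_eq_self.2 ⟨by linarith, by linarith⟩]
  · have h2 : Int.fract (2 * Int.fract t) = 2 * Int.fract t - 1 := by
      have e : (2 : ℝ) * Int.fract t = (2 * Int.fract t - 1) + ((1 : ℤ) : ℝ) := by
        push_cast; ring
      rw [e, Int.fract_add_intCast, Int.fract_eq_self.2 ⟨by linarith, by linarith⟩]
      push_cast
      ring
    rw [h2, show min (Int.fract t) (1 - Int.fract t) = 1 - Int.fract t from
      min_eq_right (by linarith), min_comm]
    congr 1 <;> ring

lemma triWave_natCast (k : ℕ) : triWave (k : ℝ) = 0 := by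
  rw [triWave, Int.fract_natCast, min_eq_left (by norm_num)]

/-- Closed form for the tropical central path on `0 ≤ λ ≤ 2`. -/
lemma tropical_central_path_formula (r : ℕ) (x : ℝ → ℕ → ℝ)
    (h1 : ∀ lam : ℝ, x lam 1 = min lam 2)
    (h2 : ∀ lam : ℝ, x lam 2 = 1)
    (hodd : ∀ lam : ℝ, ∀ j : ℕ, 1 ≤ j → j < r →
      x lam (2 * j + 1) = 1 + min (x lam (2 * j - 1)) (x lam (2 * j)))
    (heven : ∀ lam : ℝ, ∀ j : ℕ, 1 ≤ j → j < r →
      x lam (2 * j + 2) =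
        (1 - 1 / 2 ^ j) + max (x lam (2 * j - 1)) (x lam (2 * j)))
    (i : ℕ) (hi : 1 ≤ i) :
    i ≤ r → ∀ lam : ℝ, 0 ≤ lam → lam ≤ 2 →
      x lam (2 * i - 1) =
        ((i : ℝ) - 1) + lam / 2 + (4 / 2 ^ i) * triWave (2 ^ i * lam / 8) ∧
      x lam (2 * i) =
        ((i : ℝ) - 1) + lam / 2 + 2 / 2 ^ i
          - (4 / 2 ^ i) * triWave (2 ^ i * lam / 8) := by
  induction i, hi using Nat.le_induction with
  | base =>
    intro _ lam hl0 hl2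
    have hfr : Int.fract (2 ^ 1 * lam / 8) = 2 ^ 1 * lam / 8 :=
      Int.fract_eq_self.2 ⟨by linarith, by linarith⟩
    have htri : triWave (2 ^ 1 * lam / 8) = lam / 4 := by
      rw [triWave, hfr, min_eq_left (by norm_num; linarith)]
      ring
    constructor
    · show x lam 1 = _
      rw [h1, min_eq_left hl2, htri]
      norm_num
      ring
    · show x lam 2 = _
      rw [h2, htri]
      norm_num
      ring
  | succ n hn ih =>
    intro hnr lam hl0 hl2
    have hnr' : n < r := by omega
    obtain ⟨ha, hb⟩ := ih (by omega) lam hl0 hl2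
    have e1 : 2 * (n + 1) - 1 = 2 * n + 1 := by omega
    have e2 : 2 * (n + 1) = 2 * n + 2 := by omega
    have hp : (0 : ℝ) < 2 ^ n := by positivity
    have ht : (2 : ℝ) ^ (n + 1) * lam / 8 = 2 * (2 ^ n * lam / 8) := by ring
    have hu0 : 0 ≤ triWave (2 ^ n * lam / 8) := by
      have := Int.fract_nonneg (2 ^ n * lam / 8)
      have := Int.fract_lt_one (2 ^ n * lam / 8)
      rw [triWave]
      exact le_min (by linarith) (by linarith)
    set u := triWave (2 ^ n * lam / 8) with hu
    rw [e1, e2, hodd lam n hn hnr', heven lam n hn hnr', ha, hb, ht,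
      triWave_double]
    push_cast
    have h5 : (2 : ℝ) / 2 ^ n = 1 / 2 ^ n + 1 / 2 ^ n := by ring
    rcases le_total (2 * u) (1 - 2 * u) with hc | hc
    · have h4 : (4 : ℝ) / 2 ^ n * u ≤ 1 / 2 ^ n := by
        rw [div_mul_eq_mul_div, div_le_div_iff₀ hp hp]
        nlinarith
      rw [min_eq_left hc, min_eq_left (by linarith), max_eq_right (by linarith)]
      constructor <;> · simp only [pow_succ]; field_simp; ring
    · have h4 : (1 : ℝ) / 2 ^ n ≤ 4 / 2 ^ n * u := by
        rw [div_mul_eq_mul_div, div_le_div_iff₀ hp hp]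
        nlinarith
      rw [min_eq_right hc, min_eq_right (by linarith), max_eq_left (by linarith)]
      constructor <;> · simp only [pow_succ]; field_simp; ring

/-- Values of the tropical central path of the "long and winding" linear
program at the parameters `λ = 4k/2^j`: `x^λ_{2j+1} = j + 2k/2^j` and
`x^λ_{2j+2} = j + (2k+1)/2^j`, for `1 ≤ j < r` and `0 ≤ k ≤ 2^{j-1} - 1`. -/
theorem tropical_central_path_values (r : ℕ) (hr : 2 ≤ r) (x : ℝ → ℕ → ℝ)
    (h1 : ∀ lam : ℝ, x lam 1 = min lam 2)
    (h2 : ∀ lam : ℝ, x lam 2 = 1)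
    (hodd : ∀ lam : ℝ, ∀ j : ℕ, 1 ≤ j → j < r →
      x lam (2 * j + 1) = 1 + min (x lam (2 * j - 1)) (x lam (2 * j)))
    (heven : ∀ lam : ℝ, ∀ j : ℕ, 1 ≤ j → j < r →
      x lam (2 * j + 2) =
        (1 - 1 / 2 ^ j) + max (x lam (2 * j - 1)) (x lam (2 * j)))
    (j : ℕ) (hj1 : 1 ≤ j) (hjr : j < r)
    (k : ℕ) (hk : k ≤ 2 ^ (j - 1) - 1) :
    x ((4 * k : ℝ) / 2 ^ j) (2 * j + 1) = j + (2 * k : ℝ) / 2 ^ j ∧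
      x ((4 * k : ℝ) / 2 ^ j) (2 * j + 2) = j + (2 * (k : ℝ) + 1) / 2 ^ j := by
  have hp : (0 : ℝ) < 2 ^ j := by positivity
  set lam : ℝ := (4 * k : ℝ) / 2 ^ j with hlam
  have hkn : 4 * k + 4 ≤ 2 * 2 ^ j := by
    have h2 : 1 ≤ 2 ^ (j - 1) := Nat.one_le_two_pow
    have h3 : 2 * 2 ^ (j - 1) = 2 ^ j := by
      rw [← pow_succ']
      congr 1
      omega
    omega
  have hkr : (4 : ℝ) * k + 4 ≤ 2 * 2 ^ j := by
    exact_mod_cast hkn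
  have hl0 : 0 ≤ lam := by positivity
  have hl2 : lam ≤ 2 := by
    rw [hlam, div_le_iff₀ hp]
    linarith
  obtain ⟨ha, hb⟩ := tropical_central_path_formula r x h1 h2 hodd heven (j + 1)
    (by omega) (by omega) lam hl0 hl2
  have e1 : 2 * (j + 1) - 1 = 2 * j + 1 := by omega
  have e2 : 2 * (j + 1) = 2 * j + 2 := by omega
  rw [e1] at ha
  rw [e2] at hb
  have harg : (2 : ℝ) ^ (j + 1) * lam / 8 = (k : ℝ) := by
    rw [hlam, pow_succ]
    field_simp
    ring
  rw [harg, triWave_natCast, mul_zero] at ha hb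
  refine ⟨?_, ?_⟩
  · rw [ha, hlam]
    push_cast
    field_simp
    ring
  · rw [hb, hlam]
    simp only [pow_succ]
    push_cast
    field_simp
    ring
end

section
/- With the recursion x^λ_1 = min(λ,2), x^λ_2 = 1, x^λ_{2j+1} = 1 + min(x^λ_{2j−1}, x^λ_{2j}), x^λ_{2j+2} = (1−1/2^j) + max(x^λ_{2j−1}, x^λ_{2j}) for 1 ≤ j < r, the map λ ↦ (x^λ_{2r−1}, x^λ_{2r}) restricted to λ ∈ [0,2] is a piecewise linear curve whose image is a staircase with 2^{r−1} ordinary segments: for each integer 0 ≤ k < 2^{r-2}, on [4k/2^{r−1}, (4k+2)/2^{r−1}] the coordinate x^λ_{2r−1} increases linearly while x^λ_{2r} is constant, and on [(4k+2)/2^{r−1}, (4k+4)/2^{r−1}] the coordinate x^λ_{2r} increases linearly while x^λ_{2r−1} is constant. -/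
/-!
Write `P λ n = (x^λ_{2n+1}, x^λ_{2n+2})`. Level `n` cuts `[0, 2]` into `2^n` cells of width
`2δ`, `δ = 2^{-n}`, and on every cell one coordinate of `P λ n` is `a + (λ - left end)` while
the other is the constant `a + δ`; which one moves alternates from cell to cell. The step
`(u, v) ↦ (1 + min u v, 1 - δ/2 + max u v)` only sees `min` and `max`, so on the left half of a
cell it copies the moving coordinate into the first slot and on the right half into the second,
halving the cells; at level `r - 1` this is the staircase.
-/

open Set

def centralStep (c : ℝ) (p : ℝ × ℝ) : ℝ × ℝ := (1 + min p.1 p.2, 1 - c + max p.1 p.2)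

def stairPair (i : ℕ) (a s d : ℝ) : ℝ × ℝ :=
  if Even i then (a + s, a + d) else (a + d, a + s)

section StairPair

variable (a s d : ℝ) (i : ℕ)

lemma stairPair_two_mul : stairPair (2 * i) a s d = (a + s, a + d) :=
  if_pos (even_two_mul i)

lemma stairPair_two_mul_add_one : stairPair (2 * i + 1) a s d = (a + d, a + s) :=
  if_neg (Nat.not_even_two_mul_add_one i)

lemma centralStep_stairPair (c : ℝ) :
    centralStep c (stairPair i a s d) = (1 + (a + min s d), 1 - c + (a + max s d)) := by
  unfold centralStep stairPair
  split_ifs <;> simp only [min_add_add_left, max_add_add_left, min_comm d, max_comm d]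

variable {s}

lemma centralStep_stairPair_of_le {c : ℝ} (hs : s ≤ 2 * c) :
    centralStep c (stairPair i a s (2 * c)) = stairPair (2 * i) (1 + a) s c := by
  rw [centralStep_stairPair, min_eq_left hs, max_eq_right hs, stairPair_two_mul]
  congr 1 <;> ring

lemma centralStep_stairPair_of_ge {c : ℝ} (hs : 2 * c ≤ s) :
    centralStep c (stairPair i a s (2 * c)) =
      stairPair (2 * i + 1) (1 + a + c) (s - 2 * c) c := by
  rw [centralStep_stairPair, min_eq_right hs, max_eq_left hs, stairPair_two_mul_add_one]
  congr 1 <;> ring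

end StairPair

theorem exists_stairPair_of_centralStep {r : ℕ} {P : ℝ → ℕ → ℝ × ℝ}
    (h0 : ∀ lam ∈ Icc (0 : ℝ) 2, P lam 0 = (lam, 1))
    (hsucc : ∀ lam n, n + 1 < r → P lam (n + 1) = centralStep (2 ^ (n + 1))⁻¹ (P lam n))
    {n : ℕ} (hn : n < r) {i : ℕ} (hi : i < 2 ^ n) :
    ∃ a, ∀ lam ∈ Icc (2 * i * (2 ^ n)⁻¹ : ℝ) (2 * (i + 1) * (2 ^ n)⁻¹),
      P lam n = stairPair i a (lam - 2 * i * (2 ^ n)⁻¹) (2 ^ n)⁻¹ := by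
  induction n generalizing i with
  | zero =>
    obtain rfl : i = 0 := by simpa using hi
    refine ⟨0, fun lam hlam => ?_⟩
    simp only [CharP.cast_eq_zero, mul_zero, zero_add, mul_one, pow_zero, inv_one, sub_zero]
      at hlam ⊢
    rw [h0 lam hlam, stairPair, if_pos Even.zero, zero_add, zero_add]
  | succ n ih =>
    set c : ℝ := (2 ^ (n + 1))⁻¹
    have hc : (2 ^ n : ℝ)⁻¹ = 2 * c := by simp only [c, pow_succ]; ring
    have hc0 : 0 ≤ c := by positivity
    rw [pow_succ] at hi
    obtain ⟨q, rfl | rfl⟩ := Nat.even_or_odd' i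
    · obtain ⟨a, ha⟩ := ih (by omega) (show q < 2 ^ n by omega)
      refine ⟨1 + a, fun lam hlam => ?_⟩
      push_cast at hlam ⊢
      rw [hc] at ha
      rw [hsucc lam n hn, ha lam ⟨by linarith [hlam.1], by linarith [hlam.2]⟩,
        centralStep_stairPair_of_le _ _ (by linarith [hlam.2])]
      congr 1; ring
    · obtain ⟨a, ha⟩ := ih (by omega) (show q < 2 ^ n by omega)
      refine ⟨1 + a + c, fun lam hlam => ?_⟩
      push_cast at hlam ⊢
      rw [hc] at ha
      rw [hsucc lam n hn, ha lam ⟨by linarith [hlam.1], by linarith [hlam.2]⟩,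
        centralStep_stairPair_of_ge _ _ (by linarith [hlam.1])]
      congr 1; ring

lemma exists_pos_slope_of_eq_add_sub {P : ℝ → ℝ × ℝ} {L R a b : ℝ} (hLR : L ≤ R)
    (hP : ∀ lam ∈ Icc L R, P lam = (a + (lam - L), b)) :
    ∃ m : ℝ, 0 < m ∧ ∀ lam ∈ Icc L R,
      (P lam).1 = (P L).1 + m * (lam - L) ∧ (P lam).2 = (P L).2 := by
  refine ⟨1, one_pos, fun lam hlam => ?_⟩
  rw [hP lam hlam, hP L ⟨le_rfl, hLR⟩]
  simp

def levelPair (x : ℝ → ℕ → ℝ) (lam : ℝ) (n : ℕ) : ℝ × ℝ :=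
  (x lam (2 * n + 1), x lam (2 * n + 2))

section CentralPath

variable {r : ℕ} {x : ℝ → ℕ → ℝ}

lemma levelPair_zero (h1 : ∀ lam : ℝ, x lam 1 = min lam 2) (h2 : ∀ lam : ℝ, x lam 2 = 1) :
    ∀ lam ∈ Icc (0 : ℝ) 2, levelPair x lam 0 = (lam, 1) := fun lam hlam => by
  simp only [levelPair, h1, h2, min_eq_left hlam.2]

lemma levelPair_succ
    (hodd : ∀ lam : ℝ, ∀ j : ℕ, 1 ≤ j → j < r →
      x lam (2 * j + 1) = 1 + min (x lam (2 * j - 1)) (x lam (2 * j)))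
    (heven : ∀ lam : ℝ, ∀ j : ℕ, 1 ≤ j → j < r →
      x lam (2 * j + 2) = (1 - 1 / 2 ^ j) + max (x lam (2 * j - 1)) (x lam (2 * j))) :
    ∀ lam n, n + 1 < r →
      levelPair x lam (n + 1) = centralStep (2 ^ (n + 1))⁻¹ (levelPair x lam n) := by
  intro lam n hn
  have hj : 2 * (n + 1) - 1 = 2 * n + 1 := by omega
  simp only [levelPair, centralStep, hodd lam (n + 1) (by omega) hn,
    heven lam (n + 1) (by omega) hn, hj, one_div]
  rw [mul_add_one]

lemma levelPair_pred (hr : 1 ≤ r) (lam : ℝ) :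
    levelPair x lam (r - 1) = (x lam (2 * r - 1), x lam (2 * r)) := by
  obtain ⟨n, rfl⟩ := Nat.exists_eq_add_of_le' hr
  simp only [levelPair, Nat.add_sub_cancel]
  congr 2

end CentralPath

/-- The last two coordinates of the tropical central path of the "long and
winding" linear program form a staircase with `2^{r-1}` segments: for each
`0 ≤ k < 2^{r-2}`, on the interval `[4k/2^{r-1}, (4k+2)/2^{r-1}]` the
coordinate `x^λ_{2r-1}` increases linearly while `x^λ_{2r}` is constant, and on
`[(4k+2)/2^{r-1}, (4k+4)/2^{r-1}]` the coordinate `x^λ_{2r}` increases linearly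
while `x^λ_{2r-1}` is constant. -/
theorem tropical_central_path_staircase (r : ℕ) (hr : 2 ≤ r) (x : ℝ → ℕ → ℝ)
    (h1 : ∀ lam : ℝ, x lam 1 = min lam 2)
    (h2 : ∀ lam : ℝ, x lam 2 = 1)
    (hodd : ∀ lam : ℝ, ∀ j : ℕ, 1 ≤ j → j < r →
      x lam (2 * j + 1) = 1 + min (x lam (2 * j - 1)) (x lam (2 * j)))
    (heven : ∀ lam : ℝ, ∀ j : ℕ, 1 ≤ j → j < r →
      x lam (2 * j + 2) =
        (1 - 1 / 2 ^ j) + max (x lam (2 * j - 1)) (x lam (2 * j)))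
    (k : ℕ) (hk : k < 2 ^ (r - 2)) :
    (∃ m : ℝ, 0 < m ∧
      ∀ lam ∈ Set.Icc ((4 * k : ℝ) / 2 ^ (r - 1)) ((4 * k + 2 : ℝ) / 2 ^ (r - 1)),
        x lam (2 * r - 1) =
            x ((4 * k : ℝ) / 2 ^ (r - 1)) (2 * r - 1) +
              m * (lam - (4 * k : ℝ) / 2 ^ (r - 1)) ∧
          x lam (2 * r) = x ((4 * k : ℝ) / 2 ^ (r - 1)) (2 * r)) ∧
    (∃ m : ℝ, 0 < m ∧
      ∀ lam ∈ Set.Icc ((4 * k + 2 : ℝ) / 2 ^ (r - 1))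
          ((4 * k + 4 : ℝ) / 2 ^ (r - 1)),
        x lam (2 * r) =
            x ((4 * k + 2 : ℝ) / 2 ^ (r - 1)) (2 * r) +
              m * (lam - (4 * k + 2 : ℝ) / 2 ^ (r - 1)) ∧
          x lam (2 * r - 1) = x ((4 * k + 2 : ℝ) / 2 ^ (r - 1)) (2 * r - 1)) := by
  have hcells : 2 * k + 1 < 2 ^ (r - 1) := by
    rw [show r - 1 = r - 2 + 1 by omega, pow_succ]; omega
  have hstair {i : ℕ} (hi : i < 2 ^ (r - 1)) := exists_stairPair_of_centralStep
    (levelPair_zero h1 h2) (levelPair_succ hodd heven) (show r - 1 < r by omega) hi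
  obtain ⟨a₀, ha₀⟩ := hstair (show 2 * k < 2 ^ (r - 1) by omega)
  obtain ⟨a₁, ha₁⟩ := hstair hcells
  simp only [levelPair_pred (show 1 ≤ r by omega), ← div_eq_mul_inv] at ha₀ ha₁
  push_cast at ha₀ ha₁
  simp only [show 2 * (2 * (k : ℝ)) = 4 * k by ring,
    show 2 * (2 * (k : ℝ) + 1) = 4 * k + 2 by ring,
    show 2 * (2 * (k : ℝ) + 1 + 1) = 4 * k + 4 by ring] at ha₀ ha₁
  constructor
  · refine exists_pos_slope_of_eq_add_sub (P := fun lam => (x lam (2 * r - 1), x lam (2 * r)))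
      (a := a₀) (b := a₀ + (2 ^ (r - 1))⁻¹) (by gcongr; norm_num) fun lam hlam => ?_
    rw [ha₀ lam hlam, stairPair_two_mul]
  · refine exists_pos_slope_of_eq_add_sub (P := fun lam => (x lam (2 * r), x lam (2 * r - 1)))
      (a := a₁) (b := a₁ + (2 ^ (r - 1))⁻¹) (by gcongr; norm_num) fun lam hlam => ?_
    rw [← Prod.swap_prod_mk, ha₁ lam hlam, stairPair_two_mul_add_one]
    rfl
end

section
/- Consider the tropical polyhedron P in T^{2r} defined by the inequalities x₁ ≤ 2, x₂ ≤ 1, x_{2j+1} ≤ 1 + x_{2j−1}, x_{2j+1} ≤ 1 + x_{2j}, x_{2j+2} ≤ (1 − 1/2^j) + max(x_{2j−1}, x_{2j}) for 1 ≤ j < r, intersected with {x : x₁ ≤ λ} for a real λ. Then this set has a greatest element (coordinatewise maximum) given by the recursion x₁ = min(λ,2), x₂ = 1, x_{2j+1} = 1 + min(x_{2j−1}, x_{2j}), x_{2j+2} = (1 − 1/2^j) + max(x_{2j−1}, x_{2j}). -/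
/-!
The recursion defining `xb` is the system of constraints of the polyhedron read as equalities,
the two upper bounds on an odd coordinate combining into a `min`; so `xb` is feasible. Conversely,
each constraint bounds the coordinates `2j+1, 2j+2` by a monotone function of the coordinates
`2j-1, 2j`, so induction on `j` shows that every feasible point lies below `xb`.
-/

def windingSublevel (r : ℕ) (lam : ℝ) : Set (ℕ → WithBot ℝ) :=
  {z : ℕ → WithBot ℝ |
    (∀ i : ℕ, i = 0 ∨ 2 * r < i → z i = ⊥) ∧
    z 1 ≤ ((2 : ℝ) : WithBot ℝ) ∧
    z 2 ≤ ((1 : ℝ) : WithBot ℝ) ∧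
    (∀ j : ℕ, 1 ≤ j → j < r →
      z (2 * j + 1) ≤ 1 + z (2 * j - 1) ∧
      z (2 * j + 1) ≤ 1 + z (2 * j) ∧
      z (2 * j + 2) ≤
        ((1 - 1 / 2 ^ j : ℝ) : WithBot ℝ) +
          max (z (2 * j - 1)) (z (2 * j))) ∧
    z 1 ≤ ((lam : ℝ) : WithBot ℝ)}

theorem le_add_min {α : Type*} [LinearOrder α] [Add α] [AddLeftMono α] {z c a b : α}
    (ha : z ≤ c + a) (hb : z ≤ c + b) : z ≤ c + min a b :=
  min_add_add_left c a b ▸ le_min ha hb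

theorem mem_windingSublevel_of_recursion {r : ℕ} {lam : ℝ} {xb : ℕ → WithBot ℝ}
    (hb0 : ∀ i : ℕ, i = 0 ∨ 2 * r < i → xb i = ⊥)
    (hb1 : xb 1 = ((min lam 2 : ℝ) : WithBot ℝ))
    (hb2 : xb 2 = ((1 : ℝ) : WithBot ℝ))
    (hbo : ∀ j : ℕ, 1 ≤ j → j < r →
      xb (2 * j + 1) = 1 + min (xb (2 * j - 1)) (xb (2 * j)))
    (hbe : ∀ j : ℕ, 1 ≤ j → j < r →
      xb (2 * j + 2) =
        ((1 - 1 / 2 ^ j : ℝ) : WithBot ℝ) + max (xb (2 * j - 1)) (xb (2 * j))) :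
    xb ∈ windingSublevel r lam := by
  refine ⟨hb0, ?_, hb2.le, fun j hj hjr => ?_, ?_⟩
  · rw [hb1]
    exact_mod_cast min_le_right lam 2
  · rw [hbo j hj hjr]
    exact ⟨add_le_add_right (min_le_left _ _) 1, add_le_add_right (min_le_right _ _) 1,
      (hbe j hj hjr).le⟩
  · rw [hb1]
    exact_mod_cast min_le_left lam 2

theorem le_recursion_pair_of_mem_windingSublevel {r : ℕ} {lam : ℝ} {xb : ℕ → WithBot ℝ}
    (hb1 : xb 1 = ((min lam 2 : ℝ) : WithBot ℝ))
    (hb2 : xb 2 = ((1 : ℝ) : WithBot ℝ))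
    (hbo : ∀ j : ℕ, 1 ≤ j → j < r →
      xb (2 * j + 1) = 1 + min (xb (2 * j - 1)) (xb (2 * j)))
    (hbe : ∀ j : ℕ, 1 ≤ j → j < r →
      xb (2 * j + 2) =
        ((1 - 1 / 2 ^ j : ℝ) : WithBot ℝ) + max (xb (2 * j - 1)) (xb (2 * j)))
    {z : ℕ → WithBot ℝ} (hz : z ∈ windingSublevel r lam) {j : ℕ} (hj : 1 ≤ j) (hjr : j ≤ r) :
    z (2 * j - 1) ≤ xb (2 * j - 1) ∧ z (2 * j) ≤ xb (2 * j) := by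
  obtain ⟨-, hz1, hz2, hzj, hzl⟩ := hz
  induction j, hj using Nat.le_induction with
  | base =>
    rw [hb1, hb2, WithBot.coe_min]
    exact ⟨le_min hzl hz1, hz2⟩
  | succ j hj ih =>
    obtain ⟨hodd, heven⟩ := ih (by omega)
    obtain ⟨h1, h2, h3⟩ := hzj j hj (by omega)
    rw [show 2 * (j + 1) - 1 = 2 * j + 1 by omega, show 2 * (j + 1) = 2 * j + 2 by omega,
      hbo j hj (by omega), hbe j hj (by omega)]
    exact ⟨le_add_min (h1.trans (add_le_add_right hodd 1)) (h2.trans (add_le_add_right heven 1)),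
      h3.trans (add_le_add_right (max_le_max hodd heven) _)⟩

theorem le_recursion_of_mem_windingSublevel {r : ℕ} {lam : ℝ} {xb : ℕ → WithBot ℝ}
    (hb1 : xb 1 = ((min lam 2 : ℝ) : WithBot ℝ))
    (hb2 : xb 2 = ((1 : ℝ) : WithBot ℝ))
    (hbo : ∀ j : ℕ, 1 ≤ j → j < r →
      xb (2 * j + 1) = 1 + min (xb (2 * j - 1)) (xb (2 * j)))
    (hbe : ∀ j : ℕ, 1 ≤ j → j < r →
      xb (2 * j + 2) =
        ((1 - 1 / 2 ^ j : ℝ) : WithBot ℝ) + max (xb (2 * j - 1)) (xb (2 * j)))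
    {z : ℕ → WithBot ℝ} (hz : z ∈ windingSublevel r lam) : z ≤ xb := by
  intro i
  by_cases hi : i = 0 ∨ 2 * r < i
  · rw [hz.1 i hi]
    exact bot_le
  obtain ⟨hodd, heven⟩ := le_recursion_pair_of_mem_windingSublevel hb1 hb2 hbo hbe hz
    (j := (i + 1) / 2) (by omega) (by omega)
  rcases Nat.even_or_odd i with ⟨k, rfl⟩ | ⟨k, rfl⟩
  · rwa [show (k + k + 1) / 2 = k by omega, two_mul] at heven
  · rwa [show 2 * ((2 * k + 1 + 1) / 2) - 1 = 2 * k + 1 by omega] at hodd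

theorem tropical_sublevel_barycenter_general (r : ℕ) (lam : ℝ)
    (xb : ℕ → WithBot ℝ)
    (hb0 : ∀ i : ℕ, i = 0 ∨ 2 * r < i → xb i = ⊥)
    (hb1 : xb 1 = ((min lam 2 : ℝ) : WithBot ℝ))
    (hb2 : xb 2 = ((1 : ℝ) : WithBot ℝ))
    (hbo : ∀ j : ℕ, 1 ≤ j → j < r →
      xb (2 * j + 1) = 1 + min (xb (2 * j - 1)) (xb (2 * j)))
    (hbe : ∀ j : ℕ, 1 ≤ j → j < r →
      xb (2 * j + 2) =
        ((1 - 1 / 2 ^ j : ℝ) : WithBot ℝ) + max (xb (2 * j - 1)) (xb (2 * j))) :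
    xb ∈ {z : ℕ → WithBot ℝ |
        (∀ i : ℕ, i = 0 ∨ 2 * r < i → z i = ⊥) ∧
        z 1 ≤ ((2 : ℝ) : WithBot ℝ) ∧
        z 2 ≤ ((1 : ℝ) : WithBot ℝ) ∧
        (∀ j : ℕ, 1 ≤ j → j < r →
          z (2 * j + 1) ≤ 1 + z (2 * j - 1) ∧
          z (2 * j + 1) ≤ 1 + z (2 * j) ∧
          z (2 * j + 2) ≤
            ((1 - 1 / 2 ^ j : ℝ) : WithBot ℝ) +
              max (z (2 * j - 1)) (z (2 * j))) ∧
        z 1 ≤ ((lam : ℝ) : WithBot ℝ)} ∧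
      ∀ z ∈ {z : ℕ → WithBot ℝ |
        (∀ i : ℕ, i = 0 ∨ 2 * r < i → z i = ⊥) ∧
        z 1 ≤ ((2 : ℝ) : WithBot ℝ) ∧
        z 2 ≤ ((1 : ℝ) : WithBot ℝ) ∧
        (∀ j : ℕ, 1 ≤ j → j < r →
          z (2 * j + 1) ≤ 1 + z (2 * j - 1) ∧
          z (2 * j + 1) ≤ 1 + z (2 * j) ∧
          z (2 * j + 2) ≤
            ((1 - 1 / 2 ^ j : ℝ) : WithBot ℝ) +
              max (z (2 * j - 1)) (z (2 * j))) ∧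
        z 1 ≤ ((lam : ℝ) : WithBot ℝ)}, z ≤ xb :=
  ⟨mem_windingSublevel_of_recursion hb0 hb1 hb2 hbo hbe,
    fun _ hz => le_recursion_of_mem_windingSublevel hb1 hb2 hbo hbe hz⟩

/-- The sublevel set of the tropical polyhedron associated with the "long and
winding" linear program, cut by `x₁ ≤ λ`, has a greatest element
(coordinatewise maximum) `xb`, given by the recursion `xb₁ = min(λ,2)`,
`xb₂ = 1`, `xb_{2j+1} = 1 + min(xb_{2j-1}, xb_{2j})`,
`xb_{2j+2} = (1 - 1/2^j) + max(xb_{2j-1}, xb_{2j})`. Points of `T^{2r}` are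
modeled as maps `ℕ → WithBot ℝ` that are `⊥` outside the coordinates
`1, …, 2r`. -/
theorem tropical_sublevel_barycenter (r : ℕ) (hr : 1 ≤ r) (lam : ℝ)
    (xb : ℕ → WithBot ℝ)
    (hb0 : ∀ i : ℕ, i = 0 ∨ 2 * r < i → xb i = ⊥)
    (hb1 : xb 1 = ((min lam 2 : ℝ) : WithBot ℝ))
    (hb2 : xb 2 = ((1 : ℝ) : WithBot ℝ))
    (hbo : ∀ j : ℕ, 1 ≤ j → j < r →
      xb (2 * j + 1) = 1 + min (xb (2 * j - 1)) (xb (2 * j)))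
    (hbe : ∀ j : ℕ, 1 ≤ j → j < r →
      xb (2 * j + 2) =
        ((1 - 1 / 2 ^ j : ℝ) : WithBot ℝ) + max (xb (2 * j - 1)) (xb (2 * j))) :
    xb ∈ {z : ℕ → WithBot ℝ |
        (∀ i : ℕ, i = 0 ∨ 2 * r < i → z i = ⊥) ∧
        z 1 ≤ ((2 : ℝ) : WithBot ℝ) ∧
        z 2 ≤ ((1 : ℝ) : WithBot ℝ) ∧
        (∀ j : ℕ, 1 ≤ j → j < r →
          z (2 * j + 1) ≤ 1 + z (2 * j - 1) ∧
          z (2 * j + 1) ≤ 1 + z (2 * j) ∧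
          z (2 * j + 2) ≤
            ((1 - 1 / 2 ^ j : ℝ) : WithBot ℝ) +
              max (z (2 * j - 1)) (z (2 * j))) ∧
        z 1 ≤ ((lam : ℝ) : WithBot ℝ)} ∧
      ∀ z ∈ {z : ℕ → WithBot ℝ |
        (∀ i : ℕ, i = 0 ∨ 2 * r < i → z i = ⊥) ∧
        z 1 ≤ ((2 : ℝ) : WithBot ℝ) ∧
        z 2 ≤ ((1 : ℝ) : WithBot ℝ) ∧
        (∀ j : ℕ, 1 ≤ j → j < r →
          z (2 * j + 1) ≤ 1 + z (2 * j - 1) ∧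
          z (2 * j + 1) ≤ 1 + z (2 * j) ∧
          z (2 * j + 2) ≤
            ((1 - 1 / 2 ^ j : ℝ) : WithBot ℝ) +
              max (z (2 * j - 1)) (z (2 * j))) ∧
        z 1 ≤ ((lam : ℝ) : WithBot ℝ)}, z ≤ xb :=
  tropical_sublevel_barycenter_general r lam xb hb0 hb1 hb2 hbo hbe
end

section
/- A planar staircase consisting of 2^{r−1} alternating axis-parallel segments cannot be covered by fewer than 2^{r−1} tropical segments. Precisely: let P ⊂ ℝ² be the polygonal curve with vertices p_0 = (0,1), p_1 = (2,1), p_2 = (2,3), p_3 = (4,3), …, alternately increasing one coordinate by 2 while keeping the other fixed, with m = 2^{r−1} segments. If P = tsegm(z⁰,z¹) ∪ ⋯ ∪ tsegm(z^{p−1}, z^p) for points z⁰,…,z^p ∈ ℝ², then p ≥ m. -/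
set_option linter.unusedVariables false

/-- The tropical segment between `u` and `v` in `ℝ²`. -/
def tsegm2 (u v : ℝ × ℝ) : Set (ℝ × ℝ) :=
  {z | ∃ l m : ℝ, max l m = 0 ∧
    z = (max (l + u.1) (m + v.1), max (l + u.2) (m + v.2))}

/-- The `i`-th vertex of the planar staircase: `p₀ = (0,1)`, `p₁ = (2,1)`,
`p₂ = (2,3)`, `p₃ = (4,3)`, …, alternately increasing one coordinate by `2`
while keeping the other fixed. -/
noncomputable def stairVertex (i : ℕ) : ℝ × ℝ :=
  if Even i then ((i : ℝ), (i : ℝ) + 1) else ((i : ℝ) + 1, (i : ℝ))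

namespace StairAux

noncomputable def dd (M K i j : ℕ) : ℝ := ((i * K + j : ℕ) + 1) / ((M * K : ℕ) + 1)

noncomputable def pt (M K i j : ℕ) : ℝ × ℝ :=
  if Even i then ((i : ℝ) + 1 + dd M K i j, (i : ℝ) + 1)
  else ((i : ℝ) + 1, (i : ℝ) + 1 - dd M K i j)

lemma dd_pos (M K i j : ℕ) : 0 < dd M K i j := by
  unfold dd; positivity

lemma dd_lt_one {M K i j : ℕ} (hi : i < M) (hj : j < K) : dd M K i j < 1 := by
  rw [dd, div_lt_one (by positivity)]
  have h : i * K + j + 1 ≤ M * K := by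
    have h1 : i * K + j + 1 ≤ (i + 1) * K := by nlinarith
    have h2 : (i + 1) * K ≤ M * K := Nat.mul_le_mul_right _ hi
    omega
  push_cast
  have := (Nat.cast_le (α := ℝ)).2 h
  push_cast at this
  linarith

lemma dd_inj {M K i j i' j' : ℕ} (hj : j < K) (hj' : j' < K)
    (h : dd M K i j = dd M K i' j') : i = i' ∧ j = j' := by
  have hK : (0:ℝ) < ((M * K : ℕ) : ℝ) + 1 := by positivity
  rw [dd, dd, div_eq_div_iff (by positivity) (by positivity)] at h
  have h2 : ((i * K + j : ℕ) : ℝ) = ((i' * K + j' : ℕ) : ℝ) := by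
    have := mul_right_cancel₀ (ne_of_gt hK) h
    linarith
  have h3 : i * K + j = i' * K + j' := Nat.cast_injective h2
  have hK0 : 0 < K := Nat.pos_of_ne_zero (by rintro rfl; omega)
  have e1 : (K * i + j) / K = i := by rw [Nat.mul_add_div hK0, Nat.div_eq_of_lt hj]; omega
  have e2 : (K * i' + j') / K = i' := by rw [Nat.mul_add_div hK0, Nat.div_eq_of_lt hj']; omega
  have e3 : K * i + j = K * i' + j' := by rw [Nat.mul_comm K i, Nat.mul_comm K i']; exact h3
  have hi : i = i' := by rw [← e1, ← e2, e3]
  exact ⟨hi, by subst hi; omega⟩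






lemma pt_even {M K i j : ℕ} (h : Even i) :
    pt M K i j = ((i : ℝ) + 1 + dd M K i j, (i : ℝ) + 1) := if_pos h

lemma pt_odd {M K i j : ℕ} (h : ¬ Even i) :
    pt M K i j = ((i : ℝ) + 1, (i : ℝ) + 1 - dd M K i j) := if_neg h

lemma pt_sub_even {M K i j : ℕ} (h : Even i) :
    (pt M K i j).1 - (pt M K i j).2 = dd M K i j := by
  rw [pt_even h]; ring

lemma pt_sub_odd {M K i j : ℕ} (h : ¬ Even i) :
    (pt M K i j).1 - (pt M K i j).2 = dd M K i j := by
  rw [pt_odd h]; ring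

/-- distinct grid indices give distinct x−y values -/
lemma pt_diff_inj {M K : ℕ} {i j i' j' : ℕ} (hi : i < M) (hj : j < K)
    (hi' : i' < M) (hj' : j' < K)
    (h : (pt M K i j).1 - (pt M K i j).2 = (pt M K i' j').1 - (pt M K i' j').2) :
    i = i' ∧ j = j' := by
  by_cases e : Even i <;> by_cases e' : Even i' <;>
    [rw [pt_sub_even e, pt_sub_even e'] at h; rw [pt_sub_even e, pt_sub_odd e'] at h;
     rw [pt_sub_odd e, pt_sub_even e'] at h; rw [pt_sub_odd e, pt_sub_odd e'] at h] <;>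
    exact dd_inj hj hj' h

lemma pt_fst_inj {M K : ℕ} {i j i' j' : ℕ} (hi : i < M) (hj : j < K)
    (hi' : i' < M) (hj' : j' < K)
    (h : (pt M K i j).1 = (pt M K i' j').1) :
    i = i' ∧ (Even i → j = j') := by
  have d1 := dd_pos M K i j; have d2 := dd_pos M K i' j'
  have D1 := dd_lt_one hi hj; have D2 := dd_lt_one hi' hj'
  by_cases e : Even i <;> by_cases e' : Even i'
  · rw [pt_even e, pt_even e'] at h; simp only at h
    have hii : i = i' := by
      rcases lt_trichotomy i i' with hlt | heq | hgt
      · have : (i:ℝ) + 1 ≤ i' := by exact_mod_cast Nat.succ_le_of_lt hlt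
        linarith
      · exact heq
      · have : (i':ℝ) + 1 ≤ i := by exact_mod_cast Nat.succ_le_of_lt hgt
        linarith
    subst hii
    refine ⟨rfl, fun _ => (dd_inj hj hj' (by linarith)).2⟩
  · rw [pt_even e, pt_odd e'] at h; simp only at h
    exfalso
    rcases le_or_gt i' i with hle | hlt
    · have : (i':ℝ) ≤ i := by exact_mod_cast hle
      linarith
    · have : (i:ℝ) + 1 ≤ i' := by exact_mod_cast Nat.succ_le_of_lt hlt
      linarith
  · rw [pt_odd e, pt_even e'] at h; simp only at h
    exfalso
    rcases le_or_gt i i' with hle | hlt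
    · have : (i:ℝ) ≤ i' := by exact_mod_cast hle
      linarith
    · have : (i':ℝ) + 1 ≤ i := by exact_mod_cast Nat.succ_le_of_lt hlt
      linarith
  · rw [pt_odd e, pt_odd e'] at h; simp only at h
    have : (i:ℝ) = i' := by linarith
    exact ⟨by exact_mod_cast this, fun he => absurd he e⟩

lemma pt_snd_inj {M K : ℕ} {i j i' j' : ℕ} (hi : i < M) (hj : j < K)
    (hi' : i' < M) (hj' : j' < K)
    (h : (pt M K i j).2 = (pt M K i' j').2) :
    i = i' ∧ (¬ Even i → j = j') := by
  have d1 := dd_pos M K i j; have d2 := dd_pos M K i' j'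
  have D1 := dd_lt_one hi hj; have D2 := dd_lt_one hi' hj'
  by_cases e : Even i <;> by_cases e' : Even i'
  · rw [pt_even e, pt_even e'] at h; simp only at h
    have : (i:ℝ) = i' := by linarith
    exact ⟨by exact_mod_cast this, fun he => absurd e he⟩
  · rw [pt_even e, pt_odd e'] at h; simp only at h
    exfalso
    rcases le_or_gt i' i with hle | hlt
    · have : (i':ℝ) ≤ i := by exact_mod_cast hle
      linarith
    · have : (i:ℝ) + 1 ≤ i' := by exact_mod_cast Nat.succ_le_of_lt hlt
      linarith
  · rw [pt_odd e, pt_even e'] at h; simp only at h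
    exfalso
    rcases le_or_gt i i' with hle | hlt
    · have : (i:ℝ) ≤ i' := by exact_mod_cast hle
      linarith
    · have : (i':ℝ) + 1 ≤ i := by exact_mod_cast Nat.succ_le_of_lt hlt
      linarith
  · rw [pt_odd e, pt_odd e'] at h; simp only at h
    have hii : i = i' := by
      rcases lt_trichotomy i i' with hlt | heq | hgt
      · have : (i:ℝ) + 1 ≤ i' := by exact_mod_cast Nat.succ_le_of_lt hlt
        linarith
      · exact heq
      · have : (i':ℝ) + 1 ≤ i := by exact_mod_cast Nat.succ_le_of_lt hgt
        linarith
    subst hii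
    refine ⟨rfl, fun _ => (dd_inj hj hj' (by linarith)).2⟩










lemma pt_mem_segment {M K i j : ℕ} (hi : i < M) (hj : j < K) :
    pt M K i j ∈ segment ℝ (stairVertex i) (stairVertex (i + 1)) := by
  have d1 := dd_pos M K i j
  have d2 := dd_lt_one hi hj
  by_cases e : Even i
  · have e' : ¬ Even (i + 1) := by simp [Nat.even_add_one, e]
    rw [pt_even e]
    rw [stairVertex, if_pos e, stairVertex, if_neg e']
    refine ⟨(1 - dd M K i j) / 2, (1 + dd M K i j) / 2, by linarith, by linarith, by ring, ?_⟩
    have : ((i + 1 : ℕ) : ℝ) = (i : ℝ) + 1 := by push_cast; ring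
    rw [this, Prod.smul_mk, Prod.smul_mk, Prod.mk_add_mk, Prod.mk.injEq]
    constructor <;> · simp only [smul_eq_mul]; ring
  · have e' : Even (i + 1) := by simpa [Nat.even_add_one] using e
    rw [pt_odd e]
    rw [stairVertex, if_neg e, stairVertex, if_pos e']
    refine ⟨(1 + dd M K i j) / 2, (1 - dd M K i j) / 2, by linarith, by linarith, by ring, ?_⟩
    have : ((i + 1 : ℕ) : ℝ) = (i : ℝ) + 1 := by push_cast; ring
    rw [this, Prod.smul_mk, Prod.smul_mk, Prod.mk_add_mk, Prod.mk.injEq]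
    constructor <;> · simp only [smul_eq_mul]; ring

lemma mem_tsegm2_cases {u v q : ℝ × ℝ} (hq : q ∈ tsegm2 u v) :
    q = u ∨ q = v ∨ q.1 - q.2 = u.1 - u.2 ∨ q.1 - q.2 = v.1 - v.2 ∨
    (q.1 = u.1 ∧ u.2 ≤ q.2 ∧ q.2 ≤ v.2) ∨ (q.1 = v.1 ∧ v.2 ≤ q.2 ∧ q.2 ≤ u.2) ∨
    (q.2 = u.2 ∧ u.1 ≤ q.1 ∧ q.1 ≤ v.1) ∨ (q.2 = v.2 ∧ v.1 ≤ q.1 ∧ q.1 ≤ u.1) := by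
  obtain ⟨l, m, hmax, hq⟩ := hq
  have hl : l ≤ 0 := by rw [← hmax]; exact le_max_left _ _
  have hm : m ≤ 0 := by rw [← hmax]; exact le_max_right _ _
  have hlm : l = 0 ∨ m = 0 := by
    rcases max_choice l m with h | h <;> [left; right] <;> rw [h] at hmax <;> exact hmax
  have hq1 : q.1 = max (l + u.1) (m + v.1) := by rw [hq]
  have hq2 : q.2 = max (l + u.2) (m + v.2) := by rw [hq]
  rcases hlm with rfl | rfl
  · simp only [zero_add] at hq1 hq2
    rcases le_total (m + v.1) u.1 with h1 | h1 <;> rcases le_total (m + v.2) u.2 with h2 | h2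
    · left
      have : q.1 = u.1 := by rw [hq1, max_eq_left h1]
      have : q.2 = u.2 := by rw [hq2, max_eq_left h2]
      exact Prod.ext (by rw [hq1, max_eq_left h1]) (by rw [hq2, max_eq_left h2])
    · -- q = (u.1, m+v.2) : V_u
      refine Or.inr (Or.inr (Or.inr (Or.inr (Or.inl ?_))))
      refine ⟨by rw [hq1, max_eq_left h1], ?_, ?_⟩
      · rw [hq2, max_eq_right h2]; linarith
      · rw [hq2, max_eq_right h2]; linarith
    · -- q = (m+v.1, u.2) : H_u
      refine Or.inr (Or.inr (Or.inr (Or.inr (Or.inr (Or.inr (Or.inl ?_))))))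
      refine ⟨by rw [hq2, max_eq_left h2], ?_, ?_⟩
      · rw [hq1, max_eq_right h1]; linarith
      · rw [hq1, max_eq_right h1]; linarith
    · -- diagonal through v
      refine Or.inr (Or.inr (Or.inr (Or.inl ?_)))
      rw [hq1, hq2, max_eq_right h1, max_eq_right h2]; ring
  · simp only [zero_add] at hq1 hq2
    rcases le_total (l + u.1) v.1 with h1 | h1 <;> rcases le_total (l + u.2) v.2 with h2 | h2
    · right; left
      exact Prod.ext (by rw [hq1, max_eq_right h1]) (by rw [hq2, max_eq_right h2])
    · -- q = (v.1, l+u.2) : V_v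
      refine Or.inr (Or.inr (Or.inr (Or.inr (Or.inr (Or.inl ?_)))))
      refine ⟨by rw [hq1, max_eq_right h1], ?_, ?_⟩
      · rw [hq2, max_eq_left h2]; linarith
      · rw [hq2, max_eq_left h2]; linarith
    · -- q = (l+u.1, v.2) : H_v
      refine Or.inr (Or.inr (Or.inr (Or.inr (Or.inr (Or.inr (Or.inr ?_))))))
      refine ⟨by rw [hq2, max_eq_right h2], ?_, ?_⟩
      · rw [hq1, max_eq_left h1]; linarith
      · rw [hq1, max_eq_left h1]; linarith
    · -- diagonal through u
      refine Or.inr (Or.inr (Or.inl ?_))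
      rw [hq1, hq2, max_eq_left h1, max_eq_left h2]; ring








open Finset in
/-- bound on finsets of grid points with constant first index -/
lemma card_fixed_i {M K : ℕ} {T : Finset (ℕ × ℕ)}
    (hT : T ⊆ (Finset.range M) ×ˢ (Finset.range K)) (i₀ : ℕ)
    (h : ∀ ij ∈ T, ij.1 = i₀) : T.card ≤ K := by
  have : T ⊆ {i₀} ×ˢ (Finset.range K) := by
    intro ij hij
    have h2 := hT hij
    rw [Finset.mem_product] at h2 ⊢
    exact ⟨by simp [h ij hij], h2.2⟩
  calc T.card ≤ ({i₀} ×ˢ (Finset.range K)).card := Finset.card_le_card this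
    _ = K := by simp

open Finset in
lemma helperV {M K : ℕ} (a b1 b2 : ℝ)
    (T : Finset (ℕ × ℕ)) [DecidablePred fun ij : ℕ × ℕ => (pt M K ij.1 ij.2).1 = a ∧ b1 ≤ (pt M K ij.1 ij.2).2 ∧ (pt M K ij.1 ij.2).2 ≤ b2]
    (hTdef : T = ((Finset.range M) ×ˢ (Finset.range K)).filter
      (fun ij => (pt M K ij.1 ij.2).1 = a ∧ b1 ≤ (pt M K ij.1 ij.2).2 ∧ (pt M K ij.1 ij.2).2 ≤ b2))
    (hcard : 2 ≤ T.card) :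
    ∃ i₀ : ℕ, ¬ Even i₀ ∧ a = (i₀ : ℝ) + 1 ∧ b1 < (i₀ : ℝ) + 1 ∧ (i₀ : ℝ) < b2 ∧
      ∀ ij ∈ T, ij.1 = i₀ := by
  obtain ⟨x, hx, y, hy, hxy⟩ := Finset.one_lt_card.1 hcard
  have hbounds : ∀ ij ∈ T, ij.1 < M ∧ ij.2 < K ∧ (pt M K ij.1 ij.2).1 = a ∧
      b1 ≤ (pt M K ij.1 ij.2).2 ∧ (pt M K ij.1 ij.2).2 ≤ b2 := by
    intro ij hij
    rw [hTdef, Finset.mem_filter, Finset.mem_product, Finset.mem_range, Finset.mem_range] at hij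
    exact ⟨hij.1.1, hij.1.2, hij.2⟩
  obtain ⟨hxM, hxK, hxa, hxb1, hxb2⟩ := hbounds x hx
  obtain ⟨hyM, hyK, hya, hyb1, hyb2⟩ := hbounds y hy
  have hfst : (pt M K x.1 x.2).1 = (pt M K y.1 y.2).1 := by rw [hxa, hya]
  obtain ⟨hii, hjj⟩ := pt_fst_inj hxM hxK hyM hyK hfst
  have hodd : ¬ Even x.1 := by
    intro he
    exact hxy (Prod.ext hii (hjj he))
  refine ⟨x.1, hodd, ?_, ?_, ?_, ?_⟩
  · rw [← hxa, pt_odd hodd]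
  · have := dd_lt_one hxM hxK
    have h2 : (pt M K x.1 x.2).2 = (x.1 : ℝ) + 1 - dd M K x.1 x.2 := by rw [pt_odd hodd]
    have := dd_pos M K x.1 x.2
    rw [h2] at hxb1; linarith
  · have := dd_lt_one hxM hxK
    have h2 : (pt M K x.1 x.2).2 = (x.1 : ℝ) + 1 - dd M K x.1 x.2 := by rw [pt_odd hodd]
    rw [h2] at hxb2; linarith
  · intro ij hij
    obtain ⟨hM', hK', ha', _, _⟩ := hbounds ij hij
    have : (pt M K ij.1 ij.2).1 = (pt M K x.1 x.2).1 := by rw [ha', hxa]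
    exact (pt_fst_inj hM' hK' hxM hxK this).1

open Finset in
lemma helperH {M K : ℕ} (a b1 b2 : ℝ)
    (T : Finset (ℕ × ℕ)) [DecidablePred fun ij : ℕ × ℕ => (pt M K ij.1 ij.2).2 = a ∧ b1 ≤ (pt M K ij.1 ij.2).1 ∧ (pt M K ij.1 ij.2).1 ≤ b2]
    (hTdef : T = ((Finset.range M) ×ˢ (Finset.range K)).filter
      (fun ij => (pt M K ij.1 ij.2).2 = a ∧ b1 ≤ (pt M K ij.1 ij.2).1 ∧ (pt M K ij.1 ij.2).1 ≤ b2))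
    (hcard : 2 ≤ T.card) :
    ∃ i₀ : ℕ, Even i₀ ∧ a = (i₀ : ℝ) + 1 ∧ b1 < (i₀ : ℝ) + 2 ∧ (i₀ : ℝ) + 1 < b2 ∧
      ∀ ij ∈ T, ij.1 = i₀ := by
  obtain ⟨x, hx, y, hy, hxy⟩ := Finset.one_lt_card.1 hcard
  have hbounds : ∀ ij ∈ T, ij.1 < M ∧ ij.2 < K ∧ (pt M K ij.1 ij.2).2 = a ∧
      b1 ≤ (pt M K ij.1 ij.2).1 ∧ (pt M K ij.1 ij.2).1 ≤ b2 := by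
    intro ij hij
    rw [hTdef, Finset.mem_filter, Finset.mem_product, Finset.mem_range, Finset.mem_range] at hij
    exact ⟨hij.1.1, hij.1.2, hij.2⟩
  obtain ⟨hxM, hxK, hxa, hxb1, hxb2⟩ := hbounds x hx
  obtain ⟨hyM, hyK, hya, hyb1, hyb2⟩ := hbounds y hy
  have hsnd : (pt M K x.1 x.2).2 = (pt M K y.1 y.2).2 := by rw [hxa, hya]
  obtain ⟨hii, hjj⟩ := pt_snd_inj hxM hxK hyM hyK hsnd
  have heven : Even x.1 := by
    by_contra he
    exact hxy (Prod.ext hii (hjj he))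
  refine ⟨x.1, heven, ?_, ?_, ?_, ?_⟩
  · rw [← hxa, pt_even heven]
  · have := dd_lt_one hxM hxK
    have h2 : (pt M K x.1 x.2).1 = (x.1 : ℝ) + 1 + dd M K x.1 x.2 := by rw [pt_even heven]
    rw [h2] at hxb1; linarith
  · have := dd_pos M K x.1 x.2
    have h2 : (pt M K x.1 x.2).1 = (x.1 : ℝ) + 1 + dd M K x.1 x.2 := by rw [pt_even heven]
    rw [h2] at hxb2; linarith
  · intro ij hij
    obtain ⟨hM', hK', ha', _, _⟩ := hbounds ij hij
    have : (pt M K ij.1 ij.2).2 = (pt M K x.1 x.2).2 := by rw [ha', hxa]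
    exact (pt_snd_inj hM' hK' hxM hxK this).1

open Finset in
lemma card_filter_tsegm_le (M K : ℕ) (hK : 1 ≤ K) (u v : ℝ × ℝ)
    [DecidablePred fun ij : ℕ × ℕ => pt M K ij.1 ij.2 ∈ tsegm2 u v] :
    (((Finset.range M) ×ˢ (Finset.range K)).filter
      (fun ij : ℕ × ℕ => pt M K ij.1 ij.2 ∈ tsegm2 u v)).card ≤ K + 7 := by
  classical
  set G := (Finset.range M) ×ˢ (Finset.range K) with hG
  have hbnd : ∀ ij ∈ G, ij.1 < M ∧ ij.2 < K := by
    intro ij hij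
    rw [hG, Finset.mem_product, Finset.mem_range, Finset.mem_range] at hij
    exact hij
  set C1 := G.filter (fun ij : ℕ × ℕ => pt M K ij.1 ij.2 = u) with hC1
  set C2 := G.filter (fun ij : ℕ × ℕ => pt M K ij.1 ij.2 = v) with hC2
  set C3 := G.filter (fun ij : ℕ × ℕ =>
    (pt M K ij.1 ij.2).1 - (pt M K ij.1 ij.2).2 = u.1 - u.2) with hC3
  set C4 := G.filter (fun ij : ℕ × ℕ =>
    (pt M K ij.1 ij.2).1 - (pt M K ij.1 ij.2).2 = v.1 - v.2) with hC4
  set CVu := G.filter (fun ij : ℕ × ℕ => (pt M K ij.1 ij.2).1 = u.1 ∧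
    u.2 ≤ (pt M K ij.1 ij.2).2 ∧ (pt M K ij.1 ij.2).2 ≤ v.2) with hCVu
  set CVv := G.filter (fun ij : ℕ × ℕ => (pt M K ij.1 ij.2).1 = v.1 ∧
    v.2 ≤ (pt M K ij.1 ij.2).2 ∧ (pt M K ij.1 ij.2).2 ≤ u.2) with hCVv
  set CHu := G.filter (fun ij : ℕ × ℕ => (pt M K ij.1 ij.2).2 = u.2 ∧
    u.1 ≤ (pt M K ij.1 ij.2).1 ∧ (pt M K ij.1 ij.2).1 ≤ v.1) with hCHu
  set CHv := G.filter (fun ij : ℕ × ℕ => (pt M K ij.1 ij.2).2 = v.2 ∧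
    v.1 ≤ (pt M K ij.1 ij.2).1 ∧ (pt M K ij.1 ij.2).1 ≤ u.1) with hCHv
  -- diff-based injectivity: any class whose defining predicate pins down the
  -- value of pt (or its coordinate difference) has at most one element.
  have hone : ∀ (c : ℝ), (G.filter (fun ij : ℕ × ℕ =>
      (pt M K ij.1 ij.2).1 - (pt M K ij.1 ij.2).2 = c)).card ≤ 1 := by
    intro c
    apply Finset.card_le_one.2
    intro a ha b hb
    rw [Finset.mem_filter] at ha hb
    obtain ⟨haM, haK⟩ := hbnd a ha.1
    obtain ⟨hbM, hbK⟩ := hbnd b hb.1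
    have := pt_diff_inj haM haK hbM hbK (by rw [ha.2, hb.2])
    exact Prod.ext this.1 this.2
  have h1 : C1.card ≤ 1 := by
    apply Finset.card_le_one.2
    intro a ha b hb
    rw [hC1, Finset.mem_filter] at ha hb
    obtain ⟨haM, haK⟩ := hbnd a ha.1
    obtain ⟨hbM, hbK⟩ := hbnd b hb.1
    have := pt_diff_inj haM haK hbM hbK (by rw [ha.2, hb.2])
    exact Prod.ext this.1 this.2
  have h2 : C2.card ≤ 1 := by
    apply Finset.card_le_one.2
    intro a ha b hb
    rw [hC2, Finset.mem_filter] at ha hb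
    obtain ⟨haM, haK⟩ := hbnd a ha.1
    obtain ⟨hbM, hbK⟩ := hbnd b hb.1
    have := pt_diff_inj haM haK hbM hbK (by rw [ha.2, hb.2])
    exact Prod.ext this.1 this.2
  have h3 : C3.card ≤ 1 := hone _
  have h4 : C4.card ≤ 1 := hone _
  -- the axis classes
  have hGsub : ∀ T : Finset (ℕ × ℕ), T ⊆ G → T ⊆ (Finset.range M) ×ˢ (Finset.range K) := by
    intro T hT; rw [← hG]; exact hT
  have hsplit4 : (CVu ∪ CVv ∪ CHu ∪ CHv).card ≤
      (CVu ∪ CVv).card + CHu.card + CHv.card := by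
    have a1 := Finset.card_union_le (CVu ∪ CVv ∪ CHu) CHv
    have a2 := Finset.card_union_le (CVu ∪ CVv) CHu
    omega
  have hAU : (CVu ∪ CVv ∪ CHu ∪ CHv).card ≤ K + 3 := by
    by_cases hvu : 2 ≤ CVu.card
    · obtain ⟨iu, hiuodd, hua, hub1, hub2, hufix⟩ := helperV u.1 u.2 v.2 CVu hCVu hvu
      have hCHu1 : CHu.card ≤ 1 := by
        by_contra hc
        obtain ⟨hu, _, hha, hhb1, hhb2, _⟩ := helperH u.2 u.1 v.1 CHu hCHu (by omega)
        rw [hha] at hub1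
        rw [hua] at hhb1
        have l1 : (hu:ℝ) < iu := by linarith
        have l1' : hu < iu := by exact_mod_cast l1
        have l2 : (iu:ℝ) < hu + 1 := by linarith
        have l2' : iu < hu + 1 := by exact_mod_cast l2
        omega
      have hCHv1 : CHv.card ≤ 1 := by
        by_contra hc
        obtain ⟨hv, _, hha, hhb1, hhb2, _⟩ := helperH v.2 v.1 u.1 CHv hCHv (by omega)
        rw [hha] at hub2
        rw [hua] at hhb2
        have l1 : (iu:ℝ) < hv + 1 := by linarith
        have l1' : iu < hv + 1 := by exact_mod_cast l1
        have l2 : (hv:ℝ) < iu := by linarith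
        have l2' : hv < iu := by exact_mod_cast l2
        omega
      have hVV : (CVu ∪ CVv).card ≤ K + 1 := by
        by_cases hvv : 2 ≤ CVv.card
        · obtain ⟨iv, _, hva, hvb1, hvb2, hvfix⟩ := helperV v.1 v.2 u.2 CVv hCVv hvv
          have l1 : (iu:ℝ) < iv + 1 := by linarith
          have l1' : iu < iv + 1 := by exact_mod_cast l1
          have l2 : (iv:ℝ) < iu + 1 := by linarith
          have l2' : iv < iu + 1 := by exact_mod_cast l2
          have hiv : iu = iv := by omega
          have : (CVu ∪ CVv).card ≤ K := by
            apply card_fixed_i (hGsub _ ?_) iu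
            · intro ij hij
              rcases Finset.mem_union.1 hij with h | h
              · exact hufix ij h
              · rw [hiv]; exact hvfix ij h
            · apply Finset.union_subset <;>
                [exact hCVu ▸ Finset.filter_subset _ _;
                 exact hCVv ▸ Finset.filter_subset _ _]
          omega
        · have hVuK : CVu.card ≤ K := card_fixed_i (hGsub _ (hCVu ▸ Finset.filter_subset _ _)) iu hufix
          have := Finset.card_union_le CVu CVv
          omega
      omega
    · by_cases hvv : 2 ≤ CVv.card
      · obtain ⟨iv, _, hva, hvb1, hvb2, hvfix⟩ := helperV v.1 v.2 u.2 CVv hCVv hvv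
        have hCHu1 : CHu.card ≤ 1 := by
          by_contra hc
          obtain ⟨hu, _, hha, hhb1, hhb2, _⟩ := helperH u.2 u.1 v.1 CHu hCHu (by omega)
          rw [hva] at hhb2
          rw [hha] at hvb2
          have l1 : (hu:ℝ) < iv := by linarith
          have l1' : hu < iv := by exact_mod_cast l1
          have l2 : (iv:ℝ) < hu + 1 := by linarith
          have l2' : iv < hu + 1 := by exact_mod_cast l2
          omega
        have hCHv1 : CHv.card ≤ 1 := by
          by_contra hc
          obtain ⟨hv, _, hha, hhb1, hhb2, _⟩ := helperH v.2 v.1 u.1 CHv hCHv (by omega)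
          rw [hha] at hvb1
          rw [hva] at hhb1
          have l1 : (hv:ℝ) < iv := by linarith
          have l1' : hv < iv := by exact_mod_cast l1
          have l2 : (iv:ℝ) < hv + 1 := by linarith
          have l2' : iv < hv + 1 := by exact_mod_cast l2
          omega
        have hVvK : CVv.card ≤ K := card_fixed_i (hGsub _ (hCVv ▸ Finset.filter_subset _ _)) iv hvfix
        have := Finset.card_union_le CVu CVv
        omega
      · by_cases hhu : 2 ≤ CHu.card
        · obtain ⟨hu, _, hha, hhb1, hhb2, hhufix⟩ := helperH u.2 u.1 v.1 CHu hCHu hhu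
          have hHH : (CHu ∪ CHv).card ≤ K + 1 := by
            by_cases hhv : 2 ≤ CHv.card
            · obtain ⟨hv, _, hva2, hvb12, hvb22, hhvfix⟩ := helperH v.2 v.1 u.1 CHv hCHv hhv
              rw [hva2] at *
              have l1 : (hu:ℝ) < hv + 1 := by linarith
              have l1' : hu < hv + 1 := by exact_mod_cast l1
              have l2 : (hv:ℝ) < hu + 1 := by linarith
              have l2' : hv < hu + 1 := by exact_mod_cast l2
              have hef : hu = hv := by omega
              have hle : (CHu ∪ CHv).card ≤ K := by
                apply card_fixed_i (hGsub _ ?_) hu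
                · intro ij hij
                  rcases Finset.mem_union.1 hij with h | h
                  · exact hhufix ij h
                  · rw [hef]; exact hhvfix ij h
                · apply Finset.union_subset <;>
                    [exact hCHu ▸ Finset.filter_subset _ _;
                     exact hCHv ▸ Finset.filter_subset _ _]
              omega
            · have hHuK : CHu.card ≤ K := card_fixed_i (hGsub _ (hCHu ▸ Finset.filter_subset _ _)) hu hhufix
              have := Finset.card_union_le CHu CHv
              omega
          have hsplit4' : (CVu ∪ CVv ∪ CHu ∪ CHv).card ≤
              CVu.card + CVv.card + (CHu ∪ CHv).card := by
            have b1 : CVu ∪ CVv ∪ CHu ∪ CHv = CVu ∪ CVv ∪ (CHu ∪ CHv) := by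
              rw [Finset.union_assoc (CVu ∪ CVv)]
            rw [b1]
            have a1 := Finset.card_union_le (CVu ∪ CVv) (CHu ∪ CHv)
            have a2 := Finset.card_union_le CVu CVv
            omega
          omega
        · by_cases hhv : 2 ≤ CHv.card
          · obtain ⟨hv, _, hva2, hvb12, hvb22, hhvfix⟩ := helperH v.2 v.1 u.1 CHv hCHv hhv
            have hHvK : CHv.card ≤ K := card_fixed_i (hGsub _ (hCHv ▸ Finset.filter_subset _ _)) hv hhvfix
            have a2 := Finset.card_union_le CVu CVv
            omega
          · have a2 := Finset.card_union_le CVu CVv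
            omega
  -- putting it together
  have hsub : G.filter (fun ij : ℕ × ℕ => pt M K ij.1 ij.2 ∈ tsegm2 u v) ⊆
      C1 ∪ C2 ∪ C3 ∪ C4 ∪ (CVu ∪ CVv ∪ CHu ∪ CHv) := by
    intro ij hij
    rw [Finset.mem_filter] at hij
    obtain ⟨hijG, hijT⟩ := hij
    rcases mem_tsegm2_cases hijT with h | h | h | h | h | h | h | h <;>
      simp only [Finset.mem_union] <;>
      [ exact Or.inl (Or.inl (Or.inl (Or.inl (Finset.mem_filter.2 ⟨hijG, h⟩))));
        exact Or.inl (Or.inl (Or.inl (Or.inr (Finset.mem_filter.2 ⟨hijG, h⟩))));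
        exact Or.inl (Or.inl (Or.inr (Finset.mem_filter.2 ⟨hijG, h⟩)));
        exact Or.inl (Or.inr (Finset.mem_filter.2 ⟨hijG, h⟩));
        exact Or.inr (Or.inl (Or.inl (Or.inl (Finset.mem_filter.2 ⟨hijG, h⟩))));
        exact Or.inr (Or.inl (Or.inl (Or.inr (Finset.mem_filter.2 ⟨hijG, h⟩))));
        exact Or.inr (Or.inl (Or.inr (Finset.mem_filter.2 ⟨hijG, h⟩)));
        exact Or.inr (Or.inr (Finset.mem_filter.2 ⟨hijG, h⟩))]
  calc (G.filter (fun ij : ℕ × ℕ => pt M K ij.1 ij.2 ∈ tsegm2 u v)).card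
      ≤ (C1 ∪ C2 ∪ C3 ∪ C4 ∪ (CVu ∪ CVv ∪ CHu ∪ CHv)).card := Finset.card_le_card hsub
    _ ≤ C1.card + C2.card + C3.card + C4.card + (CVu ∪ CVv ∪ CHu ∪ CHv).card := by
        calc (C1 ∪ C2 ∪ C3 ∪ C4 ∪ (CVu ∪ CVv ∪ CHu ∪ CHv)).card
            ≤ (C1 ∪ C2 ∪ C3 ∪ C4).card + (CVu ∪ CVv ∪ CHu ∪ CHv).card :=
              Finset.card_union_le _ _
          _ ≤ (C1 ∪ C2 ∪ C3).card + C4.card + (CVu ∪ CVv ∪ CHu ∪ CHv).card := by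
              have := Finset.card_union_le (C1 ∪ C2 ∪ C3) C4; omega
          _ ≤ (C1 ∪ C2).card + C3.card + C4.card + (CVu ∪ CVv ∪ CHu ∪ CHv).card := by
              have := Finset.card_union_le (C1 ∪ C2) C3; omega
          _ ≤ C1.card + C2.card + C3.card + C4.card + (CVu ∪ CVv ∪ CHu ∪ CHv).card := by
              have := Finset.card_union_le C1 C2; omega
    _ ≤ K + 7 := by omega


open Finset in
theorem main_bound (r : ℕ) (p : ℕ) (z : ℕ → ℝ × ℝ)
    (hcover :
      (⋃ i ∈ Finset.range (2 ^ (r - 1)),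
          segment ℝ (stairVertex i) (stairVertex (i + 1))) =
        ⋃ i ∈ Finset.range p, tsegm2 (z i) (z (i + 1))) :
    2 ^ (r - 1) ≤ p := by
  classical
  set M := 2 ^ (r - 1) with hMdef
  set K := 8 * M with hKdef
  have hM : 1 ≤ M := Nat.one_le_two_pow
  have hK : 1 ≤ K := by omega
  set G := (Finset.range M) ×ˢ (Finset.range K) with hG
  have hmem : ∀ ij ∈ G, ∃ t ∈ Finset.range p,
      pt M K ij.1 ij.2 ∈ tsegm2 (z t) (z (t + 1)) := by
    intro ij hij
    rw [hG, Finset.mem_product, Finset.mem_range, Finset.mem_range] at hij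
    have h1 : pt M K ij.1 ij.2 ∈
        ⋃ i ∈ Finset.range M, segment ℝ (stairVertex i) (stairVertex (i + 1)) :=
      Set.mem_iUnion₂.2 ⟨ij.1, Finset.mem_range.2 hij.1, pt_mem_segment hij.1 hij.2⟩
    rw [hcover] at h1
    obtain ⟨t, ht, h⟩ := Set.mem_iUnion₂.1 h1
    exact ⟨t, ht, h⟩
  have hsub : G ⊆ (Finset.range p).biUnion
      (fun t => G.filter (fun ij : ℕ × ℕ => pt M K ij.1 ij.2 ∈ tsegm2 (z t) (z (t + 1)))) := by
    intro ij hij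
    obtain ⟨t, ht, hmem'⟩ := hmem ij hij
    exact Finset.mem_biUnion.2 ⟨t, ht, Finset.mem_filter.2 ⟨hij, hmem'⟩⟩
  have hcount : M * K ≤ p * (K + 7) := by
    calc M * K = G.card := by rw [hG]; simp
      _ ≤ ((Finset.range p).biUnion
            (fun t => G.filter (fun ij : ℕ × ℕ =>
              pt M K ij.1 ij.2 ∈ tsegm2 (z t) (z (t + 1))))).card :=
          Finset.card_le_card hsub
      _ ≤ ∑ t ∈ Finset.range p, (G.filter (fun ij : ℕ × ℕ =>
              pt M K ij.1 ij.2 ∈ tsegm2 (z t) (z (t + 1)))).card :=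
          Finset.card_biUnion_le
      _ ≤ ∑ t ∈ Finset.range p, (K + 7) := by
          apply Finset.sum_le_sum
          intro t _
          have := card_filter_tsegm_le M K hK (z t) (z (t + 1))
          rw [← hG] at this
          exact this
      _ = p * (K + 7) := by simp [mul_comm]
  show M ≤ p
  by_contra hp
  push_neg at hp
  have h2 : p + 1 ≤ M := hp
  have e1 : (p + 1) * (K + 7) ≤ M * (K + 7) := Nat.mul_le_mul_right _ h2
  have e2 : p * (K + 7) + (K + 7) ≤ M * K + 7 * M := by nlinarith [e1]
  omega

end StairAux

/-- A planar staircase consisting of `2^{r-1}` alternating axis-parallel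
segments cannot be covered by fewer than `2^{r-1}` tropical segments. -/
theorem staircase_needs_many_tropical_segments (r : ℕ) (hr : 1 ≤ r)
    (p : ℕ) (z : ℕ → ℝ × ℝ)
    (hcover :
      (⋃ i ∈ Finset.range (2 ^ (r - 1)),
          segment ℝ (stairVertex i) (stairVertex (i + 1))) =
        ⋃ i ∈ Finset.range p, tsegm2 (z i) (z (i + 1))) :
    2 ^ (r - 1) ≤ p := StairAux.main_bound r p z hcover
end
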